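/- arXiv:2102.04957 — 9 statements merged into one kernel-verified Lean document; each statement's English description precedes it below -/
import Mathlib

section
/- Let ex(n;k) denote the maximum number of arcs in a k-geodetic digraph on n vertices. For any k ≤ m ≤ n−1, we have ex(n;k) ≤ (n(n−1)/(m(m−1))) · ex(m;k). -/
/-- A directed walk in a digraph with arc relation `A`, encoded as a nonempty list of
consecutive vertices; its length is `p.length - 1`. -/
def IsWalk {V : Type*} (A : V → V → Prop) (p : List V) : Prop :=
  p ≠ [] ∧ p.Chain' A

/-- A digraph is `k`-geodetic if for every ordered pair of (not necessarily distinct)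
vertices there is at most one directed walk between them of length at most `k`. -/
def IsKGeodetic {V : Type*} (A : V → V → Prop) (k : ℕ) : Prop :=
  ∀ p q : List V, IsWalk A p → IsWalk A q → p.head? = q.head? →
    p.getLast? = q.getLast? → p.length ≤ k + 1 → q.length ≤ k + 1 → p = q

/-- The number of arcs (the size) of a digraph. -/
noncomputable def numArcs {V : Type*} (A : V → V → Prop) : ℕ :=
  Nat.card {p : V × V // A p.1 p.2}

/-- The out-degree of a vertex. -/
noncomputable def outDeg {V : Type*} (A : V → V → Prop) (v : V) : ℕ :=
  Nat.card {w : V // A v w}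

/-- The in-degree of a vertex. -/
noncomputable def inDeg {V : Type*} (A : V → V → Prop) (v : V) : ℕ :=
  Nat.card {w : V // A w v}

/-- `exGeo n k` is the maximum number of arcs of a `k`-geodetic digraph on `n` vertices. -/
noncomputable def exGeo (n k : ℕ) : ℕ :=
  sSup {m | ∃ A : Fin n → Fin n → Prop, IsKGeodetic A k ∧ numArcs A = m}

/-- An orientation of the complete bipartite graph `K_{s,t}` with partite sets
`Fin s` and `Fin t`: between any vertex of one side and any vertex of the other
there is exactly one arc, and there are no arcs within a side. -/
def IsCompleteBipOrientation (s t : ℕ) (A : Fin s ⊕ Fin t → Fin s ⊕ Fin t → Prop) : Prop :=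
  (∀ (x : Fin s) (y : Fin t),
      (A (.inl x) (.inr y) ∨ A (.inr y) (.inl x)) ∧
        ¬(A (.inl x) (.inr y) ∧ A (.inr y) (.inl x))) ∧
  (∀ x x' : Fin s, ¬ A (.inl x) (.inl x')) ∧
  (∀ y y' : Fin t, ¬ A (.inr y) (.inr y'))


section Aux

open Finset

lemma noLoops {V : Type*} {A : V → V → Prop} {k : ℕ} (hk : 1 ≤ k) (h : IsKGeodetic A k) :
    ∀ u, ¬ A u u := by
  intro u hA
  have h1 : IsWalk A [u] := ⟨by simp, List.isChain_singleton u⟩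
  have h2 : IsWalk A [u, u] := ⟨by simp, List.isChain_pair.mpr hA⟩
  have := h [u] [u, u] h1 h2 (by simp) (by simp) (by simp) (by simp; omega)
  simp at this

lemma induced_geodetic {V W : Type*} {A : V → V → Prop} {k : ℕ} (h : IsKGeodetic A k)
    {f : W → V} (hf : Function.Injective f) :
    IsKGeodetic (fun x y => A (f x) (f y)) k := by
  intro p q hp hq hh hl hlp hlq
  have hp' : IsWalk A (p.map f) := ⟨by simpa using hp.1, (List.isChain_map f).mpr hp.2⟩
  have hq' : IsWalk A (q.map f) := ⟨by simpa using hq.1, (List.isChain_map f).mpr hq.2⟩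
  have := h (p.map f) (q.map f) hp' hq' (by rw [List.head?_map, List.head?_map, hh])
    (by rw [List.getLast?_map, List.getLast?_map, hl]) (by simpa using hlp) (by simpa using hlq)
  exact (List.map_injective_iff.mpr hf) this

lemma exists_perm_pair {N : Type*} [DecidableEq N] (a b c d : N) (hab : a ≠ b) (hcd : c ≠ d) :
    ∃ σ : Equiv.Perm N, σ a = c ∧ σ b = d := by
  have hb' : Equiv.swap a c b ≠ c := by
    intro h
    have : Equiv.swap a c b = Equiv.swap a c a := by simpa [Equiv.swap_apply_left] using h
    exact hab ((Equiv.swap a c).injective this).symm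
  refine ⟨(Equiv.swap a c).trans (Equiv.swap (Equiv.swap a c b) d), ?_, ?_⟩
  · simp only [Equiv.trans_apply, Equiv.swap_apply_left]
    exact Equiv.swap_apply_of_ne_of_ne hb'.symm hcd
  · simp only [Equiv.trans_apply, Equiv.swap_apply_left]

open Classical in
lemma card_fix {m n : ℕ} (x y x' y' : Fin m) (u v u' v' : Fin n)
    (hxy : x ≠ y) (hxy' : x' ≠ y') (huv : u ≠ v) (huv' : u' ≠ v') :
    (univ.filter (fun f : Fin m → Fin n => Function.Injective f ∧ f x = u ∧ f y = v)).card
      = (univ.filter (fun f : Fin m → Fin n =>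
          Function.Injective f ∧ f x' = u' ∧ f y' = v')).card := by
  obtain ⟨σ, hσx, hσy⟩ := exists_perm_pair x' y' x y hxy' hxy
  obtain ⟨τ, hτu, hτv⟩ := exists_perm_pair u v u' v' huv huv'
  refine Finset.card_bij (fun f _ => τ ∘ f ∘ σ) ?_ ?_ ?_
  · intro f hf
    simp only [mem_filter, mem_univ, true_and] at hf ⊢
    refine ⟨τ.injective.comp (hf.1.comp σ.injective), ?_, ?_⟩
    · simp [Function.comp, hσx, hf.2.1, hτu]
    · simp [Function.comp, hσy, hf.2.2, hτv]
  · intro f hf g hg h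
    funext a
    have := congrFun h (σ.symm a)
    simp only [Function.comp_apply, Equiv.apply_symm_apply] at this
    exact τ.injective this
  · intro g hg
    simp only [mem_filter, mem_univ, true_and] at hg
    refine ⟨τ.symm ∘ g ∘ σ.symm, ?_, ?_⟩
    · simp only [mem_filter, mem_univ, true_and]
      refine ⟨τ.symm.injective.comp (hg.1.comp σ.symm.injective), ?_, ?_⟩
      · have : σ.symm x = x' := by rw [← hσx, Equiv.symm_apply_apply]
        simp [Function.comp, this, hg.2.1, ← hτu]
      · have : σ.symm y = y' := by rw [← hσy, Equiv.symm_apply_apply]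
        simp [Function.comp, this, hg.2.2, ← hτv]
    · funext a
      simp [Function.comp]

open Classical in
lemma key_count {n m : ℕ} (hm2 : 2 ≤ m) (hmn : m < n) (A : Fin n → Fin n → Prop)
    (hnl : ∀ u, ¬ A u u)
    (X : ℕ) (hX : ∀ f : Fin m → Fin n, Function.Injective f →
      (univ.filter (fun p : Fin m × Fin m => A (f p.1) (f p.2))).card ≤ X) :
    m * (m - 1) * (univ.filter (fun p : Fin n × Fin n => A p.1 p.2)).card ≤ n * (n - 1) * X := by
  have hn2 : 2 ≤ n := by omega
  set x0 : Fin m := ⟨0, by omega⟩ with hx0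
  set y0 : Fin m := ⟨1, by omega⟩ with hy0
  set u0 : Fin n := ⟨0, by omega⟩ with hu0
  set v0 : Fin n := ⟨1, by omega⟩ with hv0
  have hx0y0 : x0 ≠ y0 := by simp [hx0, hy0, Fin.ext_iff]
  have hu0v0 : u0 ≠ v0 := by simp [hu0, hv0, Fin.ext_iff]
  set C : ℕ := (univ.filter (fun f : Fin m → Fin n =>
      Function.Injective f ∧ f x0 = u0 ∧ f y0 = v0)).card with hC
  set Injs : Finset (Fin m → Fin n) := univ.filter (fun f => Function.Injective f) with hInjs
  set Arcs : Finset (Fin n × Fin n) := univ.filter (fun p => A p.1 p.2) with hArcs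
  set T : Finset ((Fin m → Fin n) × Fin m × Fin m) :=
    univ.filter (fun t => Function.Injective t.1 ∧ A (t.1 t.2.1) (t.1 t.2.2)) with hT
  -- C is positive
  have hCpos : 0 < C := by
    rw [hC]
    apply Finset.card_pos.mpr
    refine ⟨Fin.castLE hmn.le, ?_⟩
    simp only [mem_filter, mem_univ, true_and]
    exact ⟨Fin.castLE_injective hmn.le, Fin.ext (by simp [hx0, hu0]), Fin.ext (by simp [hy0, hv0])⟩
  -- Step 1 : Injs.card = n * (n-1) * C
  have step1 : Injs.card = n * (n - 1) * C := by
    have hmem : ∀ f ∈ Injs, (f x0, f y0) ∈ (univ : Finset (Fin n)).offDiag := by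
      intro f hf
      rw [hInjs, mem_filter] at hf
      simp only [mem_offDiag, mem_univ, true_and]
      exact fun h => hx0y0 (hf.2 h)
    rw [Finset.card_eq_sum_card_fiberwise hmem]
    have : ∀ b ∈ (univ : Finset (Fin n)).offDiag,
        (Injs.filter (fun f => (f x0, f y0) = b)).card = C := by
      intro b hb
      simp only [mem_offDiag, mem_univ, true_and] at hb
      rw [hInjs, Finset.filter_filter, hC]
      have hfe : (univ.filter (fun f : Fin m → Fin n => Function.Injective f ∧ (f x0, f y0) = b))
          = univ.filter (fun f => Function.Injective f ∧ f x0 = b.1 ∧ f y0 = b.2) := by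
        apply Finset.filter_congr
        intro f _
        simp [Prod.ext_iff, and_assoc]
      rw [hfe]
      exact card_fix x0 y0 x0 y0 b.1 b.2 u0 v0 hx0y0 hx0y0 hb hu0v0
    rw [Finset.sum_congr rfl this, Finset.sum_const, smul_eq_mul, Finset.offDiag_card]
    simp only [card_univ, Fintype.card_fin]
    rw [← Nat.mul_sub_one]
  -- Step 2 : T.card ≤ Injs.card * X
  have step2 : T.card ≤ Injs.card * X := by
    have hmem : ∀ t ∈ T, t.1 ∈ Injs := by
      intro t ht
      rw [hT, mem_filter] at ht
      rw [hInjs, mem_filter]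
      exact ⟨mem_univ _, ht.2.1⟩
    rw [Finset.card_eq_sum_card_fiberwise hmem]
    calc ∑ f ∈ Injs, (T.filter (fun t => t.1 = f)).card
        ≤ ∑ f ∈ Injs, X := by
          apply Finset.sum_le_sum
          intro f hf
          rw [hInjs, mem_filter] at hf
          refine le_trans ?_ (hX f hf.2)
          apply Finset.card_le_card_of_injOn (fun t => t.2)
          · intro t ht
            rw [mem_coe, mem_filter, hT, mem_filter] at ht
            simp only [mem_coe, mem_filter, mem_univ, true_and]
            rw [ht.2] at ht
            exact ht.1.2.2
          · intro s hs t ht hst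
            simp only [coe_filter, Set.mem_setOf_eq] at hs ht
            exact Prod.ext (hs.2.trans ht.2.symm) hst
      _ = Injs.card * X := by rw [Finset.sum_const, smul_eq_mul]
  -- Step 3 : T.card = m * (m-1) * Arcs.card * C
  have step3 : T.card = m * (m - 1) * Arcs.card * C := by
    have hmem : ∀ t ∈ T, ((t.2.1, t.2.2), (t.1 t.2.1, t.1 t.2.2)) ∈
        (univ : Finset (Fin m)).offDiag ×ˢ Arcs := by
      intro t ht
      rw [hT, mem_filter] at ht
      rw [mem_product, mem_offDiag, hArcs, mem_filter]
      refine ⟨⟨mem_univ _, mem_univ _, ?_⟩, mem_univ _, ht.2.2⟩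
      intro h
      rw [h] at ht
      exact hnl _ ht.2.2
    rw [Finset.card_eq_sum_card_fiberwise hmem]
    have : ∀ b ∈ (univ : Finset (Fin m)).offDiag ×ˢ Arcs,
        (T.filter (fun t => ((t.2.1, t.2.2), (t.1 t.2.1, t.1 t.2.2)) = b)).card = C := by
      intro b hb
      rw [mem_product, mem_offDiag] at hb
      obtain ⟨⟨-, -, hxy⟩, hbArcs⟩ := hb
      rw [hArcs, mem_filter] at hbArcs
      have huv : b.2.1 ≠ b.2.2 := by
        intro h; rw [h] at hbArcs; exact hnl _ hbArcs.2
      have : (T.filter (fun t => ((t.2.1, t.2.2), (t.1 t.2.1, t.1 t.2.2)) = b)).card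
          = (univ.filter (fun f : Fin m → Fin n =>
              Function.Injective f ∧ f b.1.1 = b.2.1 ∧ f b.1.2 = b.2.2)).card := by
        refine Finset.card_bij (fun t _ => t.1) ?_ ?_ ?_
        · intro t ht
          rw [mem_filter, hT, mem_filter] at ht
          obtain ⟨⟨-, hinj, -⟩, heq⟩ := ht
          simp only [Prod.ext_iff] at heq
          obtain ⟨⟨h1, h2⟩, h3, h4⟩ := heq
          simp only [mem_filter, mem_univ, true_and]
          exact ⟨hinj, by rw [← h1]; exact h3, by rw [← h2]; exact h4⟩
        · intro s hs t ht h
          rw [mem_filter] at hs ht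
          simp only [Prod.ext_iff] at hs ht
          refine Prod.ext h (Prod.ext ?_ ?_)
          · exact hs.2.1.1.trans ht.2.1.1.symm
          · exact hs.2.1.2.trans ht.2.1.2.symm
        · intro f hf
          simp only [mem_filter, mem_univ, true_and] at hf
          refine ⟨(f, (b.1.1, b.1.2)), ?_, rfl⟩
          rw [mem_filter, hT, mem_filter]
          refine ⟨⟨mem_univ _, hf.1, ?_⟩, ?_⟩
          · show A (f b.1.1) (f b.1.2)
            rw [hf.2.1, hf.2.2]; exact hbArcs.2
          · simp [Prod.ext_iff, hf.2.1, hf.2.2]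
      rw [this, hC]
      exact card_fix b.1.1 b.1.2 x0 y0 b.2.1 b.2.2 u0 v0 hxy hx0y0 huv hu0v0
    rw [Finset.sum_congr rfl this, Finset.sum_const, smul_eq_mul, Finset.card_product,
      Finset.offDiag_card]
    simp only [card_univ, Fintype.card_fin]
    rw [← Nat.mul_sub_one]
  -- combine
  have : m * (m - 1) * Arcs.card * C ≤ n * (n - 1) * X * C := by
    rw [← step3]
    calc T.card ≤ Injs.card * X := step2
      _ = n * (n - 1) * C * X := by rw [step1]
      _ = n * (n - 1) * X * C := by ring
  exact Nat.le_of_mul_le_mul_right this hCpos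

open Classical in
lemma numArcs_eq_card {V : Type*} [Fintype V] (A : V → V → Prop) :
    numArcs A = (univ.filter (fun p : V × V => A p.1 p.2)).card := by
  rw [numArcs, Nat.card_eq_fintype_card]
  exact Fintype.card_subtype _

lemma numArcs_le {V : Type*} [Fintype V] (A : V → V → Prop) :
    numArcs A ≤ Fintype.card V * Fintype.card V := by
  classical
  rw [numArcs, Nat.card_eq_fintype_card]
  calc Fintype.card {p : V × V // A p.1 p.2} ≤ Fintype.card (V × V) :=
        Fintype.card_subtype_le _
    _ = Fintype.card V * Fintype.card V := Fintype.card_prod _ _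

lemma exGeo_bddAbove (n k : ℕ) :
    BddAbove {m | ∃ A : Fin n → Fin n → Prop, IsKGeodetic A k ∧ numArcs A = m} := by
  refine ⟨n * n, fun t ht => ?_⟩
  obtain ⟨A, -, hA⟩ := ht
  rw [← hA]
  simpa using numArcs_le A

lemma false_geodetic {V : Type*} (k : ℕ) : IsKGeodetic (fun _ _ : V => False) k := by
  intro p q hp hq hh _ _ _
  obtain ⟨a, p', rfl⟩ := List.exists_cons_of_ne_nil hp.1
  obtain ⟨b, q', rfl⟩ := List.exists_cons_of_ne_nil hq.1
  match p', q' with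
  | [], [] => simpa using hh
  | [], c :: l => exact absurd (List.isChain_cons_cons.mp hq.2).1 not_false
  | c :: l, _ => exact absurd (List.isChain_cons_cons.mp hp.2).1 not_false

lemma exGeo_mem (n k : ℕ) :
    exGeo n k ∈ {m | ∃ A : Fin n → Fin n → Prop, IsKGeodetic A k ∧ numArcs A = m} := by
  apply Nat.sSup_mem _ (exGeo_bddAbove n k)
  refine ⟨numArcs (fun _ _ : Fin n => False), fun _ _ => False, false_geodetic k, rfl⟩

end Aux

/-- For any `k ≤ m ≤ n - 1`, `ex(n;k) ≤ (n(n-1)/(m(m-1))) ⬝ ex(m;k)`. -/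
theorem stmt2 (n m k : ℕ) (hk : 2 ≤ k) (hkm : k ≤ m) (hmn : m ≤ n - 1) :
    (exGeo n k : ℝ) ≤ ((n : ℝ) * (n - 1)) / ((m : ℝ) * (m - 1)) * exGeo m k := by
  have hm1 : 1 ≤ m := by omega
  have hmn' : m < n := by omega
  obtain ⟨A, hAg, hAn⟩ := exGeo_mem n k
  have hnl : ∀ u, ¬ A u u := noLoops (by omega) hAg
  have key := key_count (show 2 ≤ m by omega) hmn' A hnl (exGeo m k) ?hX
  case hX =>
    intro f hf
    rw [← numArcs_eq_card (fun x y : Fin m => A (f x) (f y))]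
    exact le_csSup (exGeo_bddAbove m k) ⟨_, induced_geodetic hAg hf, rfl⟩
  rw [← numArcs_eq_card A, hAn] at key
  have hc : ((m : ℝ) * ((m : ℝ) - 1)) * (exGeo n k : ℝ)
      ≤ ((n : ℝ) * ((n : ℝ) - 1)) * (exGeo m k : ℝ) := by
    have h := (Nat.cast_le (α := ℝ)).mpr key
    push_cast [Nat.cast_sub hm1, Nat.cast_sub (show 1 ≤ n by omega)] at h
    convert h using 1 <;> ring
  have hpos : (0 : ℝ) < (m : ℝ) * ((m : ℝ) - 1) := by
    have : (2 : ℝ) ≤ (m : ℝ) := by exact_mod_cast (show 2 ≤ m by omega)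
    nlinarith
  rw [div_mul_eq_mul_div, le_div_iff₀ hpos]
  calc (exGeo n k : ℝ) * ((m : ℝ) * ((m : ℝ) - 1))
      = ((m : ℝ) * ((m : ℝ) - 1)) * (exGeo n k : ℝ) := by ring
    _ ≤ ((n : ℝ) * ((n : ℝ) - 1)) * (exGeo m k : ℝ) := hc
    _ = (n : ℝ) * ((n : ℝ) - 1) * (exGeo m k : ℝ) := by ring
end

section
/- For n ≥ 4 and k ≥ 2, the maximum number of arcs in a k-geodetic digraph on n vertices is exactly ⌊n²/4⌋. -/
structure GoodRel {V : Type*} (A : V → V → Prop) : Prop where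
  loopless : ∀ a, ¬ A a a
  digon : ∀ a b, A a b → A b a → False
  arcpath : ∀ a b c, A a b → A a c → A c b → False
  uniq : ∀ a b c c', A a c → A c b → A a c' → A c' b → c = c'

lemma good_of_geo {V : Type*} (A : V → V → Prop) (k : ℕ) (hk : 2 ≤ k)
    (h : IsKGeodetic A k) : GoodRel A := by
  have h3 : ∀ {m : ℕ}, m ≤ 3 → m ≤ k + 1 := by omega
  constructor
  · intro a ha
    have := h [a, a] [a] ⟨by simp, by simp [List.Chain', ha]⟩ ⟨by simp, by simp [List.Chain']⟩ (by simp) (by simp)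
      (h3 (by simp)) (h3 (by simp))
    simp at this
  · intro a b hab hba
    have := h [a, b, a] [a] ⟨by simp, by simp [List.Chain', List.isChain_cons_cons, hab, hba]⟩ ⟨by simp, by simp [List.Chain']⟩
      (by simp) (by simp) (h3 (by simp)) (h3 (by simp))
    simp at this
  · intro a b c hab hac hcb
    have := h [a, b] [a, c, b] ⟨by simp, by simp [List.Chain', hab]⟩
      ⟨by simp, by simp [List.Chain', List.isChain_cons_cons, hac, hcb]⟩ (by simp) (by simp)
      (h3 (by simp)) (h3 (by simp))
    simp at this
  · intro a b c c' hac hcb hac' hc'b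
    have := h [a, c, b] [a, c', b] ⟨by simp, by simp [List.Chain', List.isChain_cons_cons, hac, hcb]⟩
      ⟨by simp, by simp [List.Chain', List.isChain_cons_cons, hac', hc'b]⟩ (by simp) (by simp)
      (h3 (by simp)) (h3 (by simp))
    simpa using this

open Finset

noncomputable def arcFS {V : Type*} [Fintype V] (A : V → V → Prop) : Finset (V × V) :=
  @Finset.filter _ (fun p => A p.1 p.2) (Classical.decPred _) Finset.univ

lemma mem_arcFS {V : Type*} [Fintype V] (A : V → V → Prop) (e : V × V) :
    e ∈ arcFS A ↔ A e.1 e.2 := by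
  simp [arcFS]

lemma numArcs_eq {V : Type*} [Fintype V] (A : V → V → Prop) :
    numArcs A = (arcFS A).card := by
  classical
  rw [numArcs, Nat.card_eq_fintype_card, Fintype.card_subtype]
  congr 1

lemma card_split {V : Type} [Fintype V] [DecidableEq V] (A : V → V → Prop) (hG : GoodRel A)
    (S : Finset V)
    (hcross : ∀ e f : V × V, A e.1 e.2 → A f.1 f.2 →
      (e.1 ∉ S ∧ e.2 ∈ S ∨ e.2 ∉ S ∧ e.1 ∈ S) →
      (f.1 ∉ S ∧ f.2 ∈ S ∨ f.2 ∉ S ∧ f.1 ∈ S) →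
      (if e.1 ∈ S then e.2 else e.1) = (if f.1 ∈ S then f.2 else f.1) → e = f) :
    (arcFS A).card ≤ (arcFS (fun a b : {x : V // x ∉ S} => A a.1 b.1)).card
      + (Fintype.card V - S.card) + (S.card * S.card - S.card) / 2 := by
  classical
  set m := arcFS A with hm
  have h1 := Finset.card_filter_add_card_filter_not
    (s := m) (p := fun e => e.1 ∈ S ∨ e.2 ∈ S)
  have h2 := Finset.card_filter_add_card_filter_not
    (s := m.filter fun e => e.1 ∈ S ∨ e.2 ∈ S) (p := fun e => e.1 ∈ S ∧ e.2 ∈ S)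
  set I := (m.filter fun e => e.1 ∈ S ∨ e.2 ∈ S).filter fun e => e.1 ∈ S ∧ e.2 ∈ S with hI
  set C := (m.filter fun e => e.1 ∈ S ∨ e.2 ∈ S).filter fun e => ¬(e.1 ∈ S ∧ e.2 ∈ S) with hC
  set O := m.filter fun e => ¬(e.1 ∈ S ∨ e.2 ∈ S) with hO
  -- facts about members
  have hImem : ∀ e ∈ I, A e.1 e.2 ∧ e.1 ∈ S ∧ e.2 ∈ S := by
    intro e he
    simp only [hI, mem_filter, hm, mem_arcFS] at he
    exact ⟨he.1.1, he.2⟩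
  -- inside bound
  have hIbound : I.card ≤ (S.card * S.card - S.card) / 2 := by
    rw [Nat.le_div_iff_mul_le two_pos]
    have hsub : I ∪ I.image Prod.swap ⊆ S.offDiag := by
      intro e he
      rcases Finset.mem_union.1 he with he | he
      · obtain ⟨ha, h1, h2⟩ := hImem e he
        refine Finset.mem_offDiag.2 ⟨h1, h2, ?_⟩
        intro hEq; exact hG.loopless e.1 (by rw [hEq] at ha ⊢; exact ha)
      · obtain ⟨f, hf, rfl⟩ := Finset.mem_image.1 he
        obtain ⟨ha, h1, h2⟩ := hImem f hf
        refine Finset.mem_offDiag.2 ⟨h2, h1, ?_⟩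
        intro hEq
        exact hG.loopless f.2 (by rw [show f.1 = f.2 from hEq.symm] at ha; exact ha)
    have hdisj : Disjoint I (I.image Prod.swap) := by
      rw [Finset.disjoint_left]
      intro e he he'
      obtain ⟨f, hf, rfl⟩ := Finset.mem_image.1 he'
      exact hG.digon f.2 f.1 (hImem _ he).1 (hImem f hf).1
    calc I.card * 2 = I.card + (I.image Prod.swap).card := by
          rw [Finset.card_image_of_injective _ Prod.swap_injective]; ring
      _ = (I ∪ I.image Prod.swap).card := (Finset.card_union_of_disjoint hdisj).symm
      _ ≤ S.offDiag.card := Finset.card_le_card hsub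
      _ = S.card * S.card - S.card := Finset.offDiag_card S
  -- cross bound
  have hCmem : ∀ e ∈ C, A e.1 e.2 ∧ (e.1 ∉ S ∧ e.2 ∈ S ∨ e.2 ∉ S ∧ e.1 ∈ S) := by
    intro e he
    simp only [hC, mem_filter, hm, mem_arcFS] at he
    obtain ⟨⟨ha, hP⟩, hQ⟩ := he
    refine ⟨ha, ?_⟩
    by_cases h1 : e.1 ∈ S
    · exact Or.inr ⟨fun h2 => hQ ⟨h1, h2⟩, h1⟩
    · exact Or.inl ⟨h1, hP.resolve_left h1⟩
  have hCbound : C.card ≤ Fintype.card V - S.card := by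
    have hle := Finset.card_le_card_of_injOn (t := Sᶜ)
      (fun e : V × V => if e.1 ∈ S then e.2 else e.1)
      (by
        intro e he
        rcases (hCmem e he).2 with ⟨h1, h2⟩ | ⟨h1, h2⟩
        · simp [h1]
        · simp [h2, h1])
      (by
        intro e he f hf heq
        exact hcross e f (hCmem e (Finset.mem_coe.1 he)).1 (hCmem f (Finset.mem_coe.1 hf)).1
          (hCmem e (Finset.mem_coe.1 he)).2 (hCmem f (Finset.mem_coe.1 hf)).2 heq)
    rwa [Finset.card_compl] at hle
  -- outside
  have hOcard : (arcFS (fun a b : {x : V // x ∉ S} => A a.1 b.1)).card = O.card := by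
    apply Finset.card_nbij (i := fun e => (e.1.1, e.2.1))
    · intro e he
      rw [Finset.mem_coe, mem_arcFS] at he
      simp only [hO, Finset.mem_coe, mem_filter, hm, mem_arcFS]
      refine ⟨he, ?_⟩
      push_neg
      exact ⟨e.1.2, e.2.2⟩
    · intro e _ f _ h
      simp only [Prod.mk.injEq] at h
      exact Prod.ext (Subtype.ext h.1) (Subtype.ext h.2)
    · intro e he
      simp only [hO, Finset.coe_filter, Set.mem_setOf_eq, hm, mem_arcFS] at he
      push_neg at he
      exact ⟨(⟨e.1, he.2.1⟩, ⟨e.2, he.2.2⟩), by simpa [mem_arcFS] using he.1, rfl⟩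
  omega

section Excl
variable {V : Type} [DecidableEq V] {A : V → V → Prop}
set_option linter.unusedSectionVars false

lemma tri_excl (hG : GoodRel A) {u v w x : V}
    (huv : A u v) (hvw : A v w) (hwu : A w u)
    (hxu : x ≠ u) (hxv : x ≠ v) (hxw : x ≠ w) :
    ∀ e f : V × V, A e.1 e.2 → A f.1 f.2 →
      (e = (x, u) ∨ e = (x, v) ∨ e = (x, w) ∨ e = (u, x) ∨ e = (v, x) ∨ e = (w, x)) →
      (f = (x, u) ∨ f = (x, v) ∨ f = (x, w) ∨ f = (u, x) ∨ f = (v, x) ∨ f = (w, x)) →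
      e = f := by
  have n12 : ¬(A x u ∧ A u x) := fun ⟨h1, h2⟩ => hG.digon _ _ h1 h2
  have n34 : ¬(A x v ∧ A v x) := fun ⟨h1, h2⟩ => hG.digon _ _ h1 h2
  have n56 : ¬(A x w ∧ A w x) := fun ⟨h1, h2⟩ => hG.digon _ _ h1 h2
  have n13 : ¬(A x u ∧ A x v) := fun ⟨h1, h2⟩ => hG.arcpath x v u h2 h1 huv
  have n15 : ¬(A x u ∧ A x w) := fun ⟨h1, h2⟩ => hG.arcpath x u w h1 h2 hwu
  have n35 : ¬(A x v ∧ A x w) := fun ⟨h1, h2⟩ => hG.arcpath x w v h2 h1 hvw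
  have n24 : ¬(A u x ∧ A v x) := fun ⟨h1, h2⟩ => hG.arcpath u x v h1 huv h2
  have n26 : ¬(A u x ∧ A w x) := fun ⟨h1, h2⟩ => hG.arcpath w x u h2 hwu h1
  have n46 : ¬(A v x ∧ A w x) := fun ⟨h1, h2⟩ => hG.arcpath v x w h1 hvw h2
  have n23 : ¬(A u x ∧ A x v) := fun ⟨h1, h2⟩ => hG.arcpath u v x huv h1 h2
  have n45 : ¬(A v x ∧ A x w) := fun ⟨h1, h2⟩ => hG.arcpath v w x hvw h1 h2
  have n61 : ¬(A w x ∧ A x u) := fun ⟨h1, h2⟩ => hG.arcpath w u x hwu h1 h2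
  have n14 : ¬(A x u ∧ A v x) := fun ⟨h1, h2⟩ => hxw (hG.uniq v u x w h2 h1 hvw hwu)
  have n36 : ¬(A x v ∧ A w x) := fun ⟨h1, h2⟩ => hxu (hG.uniq w v x u h2 h1 hwu huv)
  have n25 : ¬(A u x ∧ A x w) := fun ⟨h1, h2⟩ => hxv (hG.uniq u w x v h1 h2 huv hvw)
  rintro e f hae haf he hf
  rcases he with rfl | rfl | rfl | rfl | rfl | rfl <;>
    rcases hf with rfl | rfl | rfl | rfl | rfl | rfl <;>
    simp only [] at hae haf <;>
    first | rfl | (exfalso; first | exact n12 ⟨hae, haf⟩ | exact n12 ⟨haf, hae⟩ | exact n34 ⟨hae, haf⟩ | exact n34 ⟨haf, hae⟩ | exact n56 ⟨hae, haf⟩ | exact n56 ⟨haf, hae⟩ | exact n13 ⟨hae, haf⟩ | exact n13 ⟨haf, hae⟩ | exact n15 ⟨hae, haf⟩ | exact n15 ⟨haf, hae⟩ | exact n35 ⟨hae, haf⟩ | exact n35 ⟨haf, hae⟩ | exact n24 ⟨hae, haf⟩ | exact n24 ⟨haf, hae⟩ | exact n26 ⟨hae, haf⟩ | exact n26 ⟨haf,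 hae⟩ | exact n46 ⟨hae, haf⟩ | exact n46 ⟨haf, hae⟩ | exact n23 ⟨hae, haf⟩ | exact n23 ⟨haf, hae⟩ | exact n45 ⟨hae, haf⟩ | exact n45 ⟨haf, hae⟩ | exact n61 ⟨hae, haf⟩ | exact n61 ⟨haf, hae⟩ | exact n14 ⟨hae, haf⟩ | exact n14 ⟨haf, hae⟩ | exact n36 ⟨hae, haf⟩ | exact n36 ⟨haf, hae⟩ | exact n25 ⟨hae, haf⟩ | exact n25 ⟨haf, hae⟩)

lemma tri_cross (hG : GoodRel A) {u v w : V}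
    (huv : A u v) (hvw : A v w) (hwu : A w u) :
    ∀ e f : V × V, A e.1 e.2 → A f.1 f.2 →
      (e.1 ∉ ({u, v, w} : Finset V) ∧ e.2 ∈ ({u, v, w} : Finset V) ∨
        e.2 ∉ ({u, v, w} : Finset V) ∧ e.1 ∈ ({u, v, w} : Finset V)) →
      (f.1 ∉ ({u, v, w} : Finset V) ∧ f.2 ∈ ({u, v, w} : Finset V) ∨
        f.2 ∉ ({u, v, w} : Finset V) ∧ f.1 ∈ ({u, v, w} : Finset V)) →
      (if e.1 ∈ ({u, v, w} : Finset V) then e.2 else e.1)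
        = (if f.1 ∈ ({u, v, w} : Finset V) then f.2 else f.1) → e = f := by
  intro e f hae haf he hf heq
  have shape : ∀ g : V × V, A g.1 g.2 →
      (g.1 ∉ ({u, v, w} : Finset V) ∧ g.2 ∈ ({u, v, w} : Finset V) ∨
        g.2 ∉ ({u, v, w} : Finset V) ∧ g.1 ∈ ({u, v, w} : Finset V)) →
      ∀ x, (if g.1 ∈ ({u, v, w} : Finset V) then g.2 else g.1) = x →
      (x ∉ ({u, v, w} : Finset V)) ∧
      (g = (x, u) ∨ g = (x, v) ∨ g = (x, w) ∨ g = (u, x) ∨ g = (v, x) ∨ g = (w, x)) := by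
    rintro ⟨g1, g2⟩ ha (⟨h1, h2⟩ | ⟨h1, h2⟩) x hx
    · simp only [if_neg h1] at hx
      subst hx
      refine ⟨h1, ?_⟩
      simp only [Finset.mem_insert, Finset.mem_singleton] at h2
      rcases h2 with rfl | rfl | rfl
      · exact Or.inl rfl
      · exact Or.inr (Or.inl rfl)
      · exact Or.inr (Or.inr (Or.inl rfl))
    · simp only [if_pos h2] at hx
      subst hx
      refine ⟨h1, ?_⟩
      simp only [Finset.mem_insert, Finset.mem_singleton] at h2
      rcases h2 with rfl | rfl | rfl
      · exact Or.inr (Or.inr (Or.inr (Or.inl rfl)))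
      · exact Or.inr (Or.inr (Or.inr (Or.inr (Or.inl rfl))))
      · exact Or.inr (Or.inr (Or.inr (Or.inr (Or.inr rfl))))
  set x := (if e.1 ∈ ({u, v, w} : Finset V) then e.2 else e.1) with hxdef
  obtain ⟨hxS, hE⟩ := shape e hae he x rfl
  obtain ⟨-, hF⟩ := shape f haf hf x heq.symm
  have hxu : x ≠ u := fun h => hxS (by simp [h])
  have hxv : x ≠ v := fun h => hxS (by simp [h])
  have hxw : x ≠ w := fun h => hxS (by simp [h])
  exact tri_excl hG huv hvw hwu hxu hxv hxw e f hae haf hE hF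

lemma bip_cross (hG : GoodRel A)
    (hT : ∀ a b c : V, a ≠ b → a ≠ c → b ≠ c →
      (A a b ∨ A b a) → (A b c ∨ A c b) → (A a c ∨ A c a) → False)
    {u v : V} (huv : A u v) :
    ∀ e f : V × V, A e.1 e.2 → A f.1 f.2 →
      (e.1 ∉ ({u, v} : Finset V) ∧ e.2 ∈ ({u, v} : Finset V) ∨
        e.2 ∉ ({u, v} : Finset V) ∧ e.1 ∈ ({u, v} : Finset V)) →
      (f.1 ∉ ({u, v} : Finset V) ∧ f.2 ∈ ({u, v} : Finset V) ∨
        f.2 ∉ ({u, v} : Finset V) ∧ f.1 ∈ ({u, v} : Finset V)) →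
      (if e.1 ∈ ({u, v} : Finset V) then e.2 else e.1)
        = (if f.1 ∈ ({u, v} : Finset V) then f.2 else f.1) → e = f := by
  intro e f hae haf he hf heq
  have hne : u ≠ v := fun h => hG.loopless u (by rw [h] at huv ⊢; exact huv)
  have shape : ∀ g : V × V, A g.1 g.2 →
      (g.1 ∉ ({u, v} : Finset V) ∧ g.2 ∈ ({u, v} : Finset V) ∨
        g.2 ∉ ({u, v} : Finset V) ∧ g.1 ∈ ({u, v} : Finset V)) →
      ∀ x, (if g.1 ∈ ({u, v} : Finset V) then g.2 else g.1) = x →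
      (x ∉ ({u, v} : Finset V)) ∧
      (g = (x, u) ∨ g = (x, v) ∨ g = (u, x) ∨ g = (v, x)) := by
    rintro ⟨g1, g2⟩ ha (⟨h1, h2⟩ | ⟨h1, h2⟩) x hx
    · simp only [if_neg h1] at hx
      subst hx
      refine ⟨h1, ?_⟩
      simp only [Finset.mem_insert, Finset.mem_singleton] at h2
      rcases h2 with rfl | rfl
      · exact Or.inl rfl
      · exact Or.inr (Or.inl rfl)
    · simp only [if_pos h2] at hx
      subst hx
      refine ⟨h1, ?_⟩
      simp only [Finset.mem_insert, Finset.mem_singleton] at h2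
      rcases h2 with rfl | rfl
      · exact Or.inr (Or.inr (Or.inl rfl))
      · exact Or.inr (Or.inr (Or.inr rfl))
  set x := (if e.1 ∈ ({u, v} : Finset V) then e.2 else e.1) with hxdef
  obtain ⟨hxS, hE⟩ := shape e hae he x rfl
  obtain ⟨-, hF⟩ := shape f haf hf x heq.symm
  have hxu : x ≠ u := fun h => hxS (by simp [h])
  have hxv : x ≠ v := fun h => hxS (by simp [h])
  have n12 : ¬(A x u ∧ A u x) := fun ⟨h1, h2⟩ => hG.digon _ _ h1 h2
  have n34 : ¬(A x v ∧ A v x) := fun ⟨h1, h2⟩ => hG.digon _ _ h1 h2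
  have n13 : ¬(A x u ∧ A x v) := fun ⟨h1, h2⟩ => hT x u v hxu hxv hne (Or.inl h1) (Or.inl huv) (Or.inl h2)
  have n14 : ¬(A x u ∧ A v x) := fun ⟨h1, h2⟩ => hT x u v hxu hxv hne (Or.inl h1) (Or.inl huv) (Or.inr h2)
  have n23 : ¬(A u x ∧ A x v) := fun ⟨h1, h2⟩ => hT x u v hxu hxv hne (Or.inr h1) (Or.inl huv) (Or.inl h2)
  have n24 : ¬(A u x ∧ A v x) := fun ⟨h1, h2⟩ => hT x u v hxu hxv hne (Or.inr h1) (Or.inl huv) (Or.inr h2)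
  clear_value x
  rcases hE with rfl | rfl | rfl | rfl <;> rcases hF with rfl | rfl | rfl | rfl <;>
    simp only [] at hae haf <;>
    first | rfl | (exfalso; first | exact n12 ⟨hae, haf⟩ | exact n12 ⟨haf, hae⟩ | exact n34 ⟨hae, haf⟩ | exact n34 ⟨haf, hae⟩ | exact n13 ⟨hae, haf⟩ | exact n13 ⟨haf, hae⟩ | exact n14 ⟨hae, haf⟩ | exact n14 ⟨haf, hae⟩ | exact n23 ⟨hae, haf⟩ | exact n23 ⟨haf, hae⟩ | exact n24 ⟨hae, haf⟩ | exact n24 ⟨haf, hae⟩)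
end Excl

def hb (n : ℕ) : ℕ := if n = 3 then 3 else n ^ 2 / 4

lemma sub_fintype_card {V : Type} [Fintype V] [DecidableEq V] (S : Finset V) :
    Fintype.card {x : V // x ∉ S} = Fintype.card V - S.card := by
  rw [Fintype.card_subtype]
  have h : univ.filter (fun x : V => x ∉ S) = Sᶜ := by ext y; simp
  rw [h, Finset.card_compl]

lemma goodB {V : Type} [DecidableEq V] {A : V → V → Prop} (hG : GoodRel A) (S : Finset V) :
    GoodRel (fun a b : {x : V // x ∉ S} => A a.1 b.1) where
  loopless a := hG.loopless a.1
  digon a b h1 h2 := hG.digon _ _ h1 h2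
  arcpath a b c h1 h2 h3 := hG.arcpath _ _ _ h1 h2 h3
  uniq a b c c' h1 h2 h3 h4 := Subtype.ext (hG.uniq _ _ _ _ h1 h2 h3 h4)

lemma mantel_aux : ∀ (N : ℕ) (V : Type) [Fintype V] [DecidableEq V] (A : V → V → Prop),
    Fintype.card V ≤ N → GoodRel A →
    (∀ a b c : V, a ≠ b → a ≠ c → b ≠ c →
      (A a b ∨ A b a) → (A b c ∨ A c b) → (A a c ∨ A c a) → False) →
    (arcFS A).card ≤ (Fintype.card V) ^ 2 / 4 := by
  intro N
  induction N with
  | zero =>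
    intro V _ _ A hcard _ _
    have h1 : (arcFS A).card ≤ Fintype.card (V × V) := Finset.card_le_univ _
    rw [Fintype.card_prod] at h1
    have : Fintype.card V = 0 := by omega
    rw [this] at h1
    omega
  | succ N ih =>
    intro V _ _ A hcard hG hT
    by_cases hne : (arcFS A).Nonempty
    case neg =>
      rw [Finset.not_nonempty_iff_eq_empty] at hne
      simp [hne]
    obtain ⟨e, he⟩ := hne
    rw [mem_arcFS] at he
    obtain ⟨u, v⟩ := e
    simp only [] at he
    have hneuv : u ≠ v := fun h => hG.loopless u (by rw [h] at he ⊢; exact he)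
    set S : Finset V := {u, v} with hS
    have hScard : S.card = 2 := by
      rw [hS, Finset.card_insert_of_notMem (by simp [hneuv]), Finset.card_singleton]
    have hkey := card_split A hG S (bip_cross hG hT he)
    have hsub : Fintype.card {x : V // x ∉ S} = Fintype.card V - 2 := by
      rw [sub_fintype_card, hScard]
    have hVS : 2 ≤ Fintype.card V := by
      have := Finset.card_le_univ S
      rw [hScard] at this
      exact this
    have hIH := ih {x : V // x ∉ S} (fun a b => A a.1 b.1) (by omega) (goodB hG S)
      (fun a b c hab hac hbc h1 h2 h3 =>
        hT a.1 b.1 c.1 (fun h => hab (Subtype.ext h)) (fun h => hac (Subtype.ext h))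
          (fun h => hbc (Subtype.ext h)) h1 h2 h3)
    rw [hsub] at hIH
    rw [hScard] at hkey
    have heq2 : Fintype.card V - 2 + 2 = Fintype.card V := by omega
    have hsq : (Fintype.card V - 2 + 2) ^ 2
        = (Fintype.card V - 2) ^ 2 + 4 * (Fintype.card V - 2) + 4 := by ring
    rw [heq2] at hsq
    omega

lemma main_aux : ∀ (N : ℕ) (V : Type) [Fintype V] [DecidableEq V] (A : V → V → Prop),
    Fintype.card V ≤ N → GoodRel A → (arcFS A).card ≤ hb (Fintype.card V) := by
  intro N
  induction N with
  | zero =>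
    intro V _ _ A hcard _
    have h1 : (arcFS A).card ≤ Fintype.card (V × V) := Finset.card_le_univ _
    rw [Fintype.card_prod] at h1
    have h0 : Fintype.card V = 0 := by omega
    rw [h0] at h1 ⊢
    simpa [hb] using h1
  | succ N ih =>
    intro V _ _ A hcard hG
    by_cases htri : ∃ u v w : V, A u v ∧ A v w ∧ A w u
    case neg =>
      -- triangle-free: underlying graph has no triangle
      push_neg at htri
      have hT : ∀ a b c : V, a ≠ b → a ≠ c → b ≠ c →
          (A a b ∨ A b a) → (A b c ∨ A c b) → (A a c ∨ A c a) → False := by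
        intro a b c hab hac hbc h1 h2 h3
        have hnd : ∀ x y z : V, A x y → A y z → A z x → False := fun x y z p q r =>
          htri x y z p q r
        rcases h1 with h1 | h1 <;> rcases h2 with h2 | h2 <;> rcases h3 with h3 | h3
        · exact hG.arcpath a c b h3 h1 h2
        · exact hnd a b c h1 h2 h3
        · exact hG.arcpath a b c h1 h3 h2
        · exact hG.arcpath c b a h2 h3 h1
        · exact hG.arcpath b c a h2 h1 h3
        · exact hG.arcpath b a c h1 h2 h3
        · exact hnd a c b h3 h2 h1
        · exact hG.arcpath c a b h3 h2 h1
      have := mantel_aux (N + 1) V A hcard hG hT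
      have hble : (Fintype.card V) ^ 2 / 4 ≤ hb (Fintype.card V) := by
        unfold hb
        split
        · next h => rw [h]; norm_num
        · exact le_rfl
      omega
    obtain ⟨u, v, w, huv, hvw, hwu⟩ := htri
    have hneuv : u ≠ v := fun h => hG.loopless u (by rw [h] at huv ⊢; exact huv)
    have hnevw : v ≠ w := fun h => hG.loopless v (by rw [h] at hvw ⊢; exact hvw)
    have hnewu : w ≠ u := fun h => hG.loopless w (by rw [h] at hwu ⊢; exact hwu)
    set S : Finset V := {u, v, w} with hS
    have hScard : S.card = 3 := by
      rw [hS, Finset.card_insert_of_notMem (by simp [hneuv, Ne.symm hnewu]),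
        Finset.card_insert_of_notMem (by simp [hnevw]), Finset.card_singleton]
    have hkey := card_split A hG S (tri_cross hG huv hvw hwu)
    have hsub : Fintype.card {x : V // x ∉ S} = Fintype.card V - 3 := by
      rw [sub_fintype_card, hScard]
    have hVS : 3 ≤ Fintype.card V := by
      have := Finset.card_le_univ S
      rw [hScard] at this
      exact this
    have hIH := ih {x : V // x ∉ S} (fun a b => A a.1 b.1) (by omega) (goodB hG S)
    rw [hsub] at hIH
    rw [hScard] at hkey
    have hrec : hb (Fintype.card V - 3) + Fintype.card V ≤ hb (Fintype.card V) := by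
      obtain ⟨n, hn⟩ : ∃ n, Fintype.card V = n := ⟨_, rfl⟩
      rw [hn]
      rw [hn] at hVS
      rcases Nat.lt_or_ge n 7 with hlt | hge
      · interval_cases n <;> decide
      · have hb1 : hb (n - 3) = (n - 3) ^ 2 / 4 := by unfold hb; rw [if_neg (by omega)]
        have hb2 : hb n = n ^ 2 / 4 := by unfold hb; rw [if_neg (by omega)]
        have heq2 : n - 3 + 3 = n := by omega
        have hsq : (n - 3 + 3) ^ 2 = (n - 3) ^ 2 + 6 * (n - 3) + 9 := by ring
        rw [heq2] at hsq
        rw [hb1, hb2]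
        omega
    omega

def bipRel (n : ℕ) : Fin n → Fin n → Prop :=
  fun i j => (i : ℕ) < n / 2 ∧ n / 2 ≤ (j : ℕ)

lemma bip_walk_shape {n : ℕ} (p : List (Fin n)) (hp : IsWalk (bipRel n) p) :
    (∃ a, p = [a]) ∨ ∃ a b, p = [a, b] ∧ bipRel n a b := by
  obtain ⟨hne, hch⟩ := hp
  match p with
  | [] => exact absurd rfl hne
  | [a] => exact Or.inl ⟨a, rfl⟩
  | [a, b] =>
    rw [List.Chain', List.isChain_pair] at hch
    exact Or.inr ⟨a, b, rfl, hch⟩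
  | a :: b :: c :: t =>
    exfalso
    rw [List.Chain', List.isChain_cons_cons] at hch
    have h2 := (List.isChain_cons_cons.1 hch.2).1
    have h1 := hch.1
    obtain ⟨-, hb⟩ := h1
    obtain ⟨hb', -⟩ := h2
    omega

lemma bip_geodetic (n k : ℕ) : IsKGeodetic (bipRel n) k := by
  intro p q hp hq hhead hlast _ _
  have hloop : ∀ a : Fin n, ¬ bipRel n a a := by
    intro a ⟨h1, h2⟩; omega
  rcases bip_walk_shape p hp with ⟨a, rfl⟩ | ⟨a, b, rfl, hab⟩ <;>
    rcases bip_walk_shape q hq with ⟨a', rfl⟩ | ⟨a', b', rfl, hab'⟩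
  · have : a = a' := by simpa using hhead
    rw [this]
  · exfalso
    simp only [List.head?] at hhead
    have h1 : a = a' := by simpa using hhead
    have h2 : a = b' := by simpa using hlast
    subst h1
    rw [← h2] at hab'
    exact hloop a hab'
  · exfalso
    have h1 : a = a' := by simpa using hhead
    have h2 : b = a' := by simpa using hlast
    subst h1
    rw [h2] at hab
    exact hloop _ hab
  · have h1 : a = a' := by simpa using hhead
    have h2 : b = b' := by simpa using hlast
    rw [h1, h2]

lemma bip_numArcs (n : ℕ) : numArcs (bipRel n) = n ^ 2 / 4 := by
  classical
  rw [numArcs, Nat.card_eq_fintype_card, Fintype.card_subtype]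
  have hsplit : (univ.filter fun p : Fin n × Fin n => bipRel n p.1 p.2).card
      = ((univ.filter fun i : Fin n => (i : ℕ) < n / 2) ×ˢ
        (univ.filter fun j : Fin n => n / 2 ≤ (j : ℕ))).card := by
    congr 1
    ext p
    rw [Finset.mem_filter]; simp [bipRel, Finset.mem_product]
  rw [hsplit, Finset.card_product]
  have hc1 : (univ.filter fun i : Fin n => (i : ℕ) < n / 2).card = n / 2 := by
    have h := Finset.card_nbij (s := univ.filter fun i : Fin n => (i : ℕ) < n / 2)
      (t := Finset.range (n / 2)) (i := fun i : Fin n => (i : ℕ))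
      (by
        intro i hi
        simp only [mem_filter, mem_coe] at hi
        simpa using hi.2)
      (fun i _ j _ h => Fin.val_injective h)
      (by
        intro x hx
        simp only [Finset.coe_range, Set.mem_Iio] at hx
        have hxn : x < n := lt_of_lt_of_le hx (Nat.div_le_self n 2)
        exact ⟨⟨x, hxn⟩, by simp [hx], rfl⟩)
    rw [h, Finset.card_range]
  have hc2 : (univ.filter fun j : Fin n => n / 2 ≤ (j : ℕ)).card = n - n / 2 := by
    have : (univ.filter fun j : Fin n => n / 2 ≤ (j : ℕ)).card = (Finset.Ico (n / 2) n).card := by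
      apply Finset.card_nbij (i := fun i : Fin n => (i : ℕ))
      · intro i hi
        simp only [mem_filter, mem_coe] at hi
        simp [Finset.mem_Ico, hi.2, i.2]
      · exact fun i _ j _ h => Fin.val_injective h
      · intro x hx
        simp only [Finset.coe_Ico, Set.mem_Ico] at hx
        exact ⟨⟨x, hx.2⟩, by simp [hx.1], rfl⟩

    rw [this, Nat.card_Ico]
  rw [hc1, hc2]
  -- n/2 * (n - n/2) = n^2/4
  obtain ⟨q, r, hr, hn⟩ : ∃ q r, r < 2 ∧ n = 2 * q + r :=
    ⟨n / 2, n % 2, Nat.mod_lt _ two_pos, (Nat.div_add_mod n 2).symm⟩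
  subst hn
  interval_cases r
  · have h1 : (2 * q + 0) / 2 = q := by omega
    have h2 : (2 * q + 0) ^ 2 = 4 * (q * q) := by ring
    rw [h1, h2]
    have h3 : 2 * q + 0 - q = q := by omega
    rw [h3, Nat.mul_div_cancel_left _ (by norm_num : (0:ℕ) < 4)]
  · have h1 : (2 * q + 1) / 2 = q := by omega
    have h2 : (2 * q + 1) ^ 2 = 4 * (q * q + q) + 1 := by ring
    rw [h1, h2]
    have h3 : 2 * q + 1 - q = q + 1 := by omega
    rw [h3]
    have h4 : (4 * (q * q + q) + 1) / 4 = q * q + q := by omega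
    rw [h4]
    ring


/-- For `n ≥ 4` and `k ≥ 2`, the maximum number of arcs of a `k`-geodetic digraph on
`n` vertices is exactly `⌊n²/4⌋`. -/
theorem stmt3 (n k : ℕ) (hn : 4 ≤ n) (hk : 2 ≤ k) : exGeo n k = n ^ 2 / 4 := by
  have hub : ∀ m ∈ {m | ∃ A : Fin n → Fin n → Prop, IsKGeodetic A k ∧ numArcs A = m},
      m ≤ n ^ 2 / 4 := by
    rintro m ⟨A, hgeo, rfl⟩
    have hG := good_of_geo A k hk hgeo
    have hmain := main_aux n (Fin n) A (le_of_eq (Fintype.card_fin n)) hG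
    rw [Fintype.card_fin] at hmain
    rw [numArcs_eq]
    have hbn : hb n = n ^ 2 / 4 := by unfold hb; rw [if_neg (by omega)]
    omega
  have hmem : n ^ 2 / 4 ∈ {m | ∃ A : Fin n → Fin n → Prop, IsKGeodetic A k ∧ numArcs A = m} :=
    ⟨bipRel n, bip_geodetic n k, bip_numArcs n⟩
  exact le_antisymm (csSup_le ⟨_, hmem⟩ hub) (le_csSup ⟨_, fun m hm => hub m hm⟩ hmem)
end

section
/- If a simple undirected graph G admits a 2-geodetic orientation, then G contains no subgraph isomorphic to K₄ minus an edge (the diamond graph). Equivalently, no two distinct triangles of G share an edge. -/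
lemma no_shortcut {V : Type*} {A : V → V → Prop} (hgeo : IsKGeodetic A 2)
    {a b c : V} (h1 : A a b) (h2 : A b c) (h3 : A a c) : False := by
  have := hgeo [a, b, c] [a, c] ⟨by simp, by simp [List.Chain', h1, h2]⟩ ⟨by simp, by simp [List.Chain', h3]⟩
    rfl rfl (by simp) (by simp)
  simp at this

lemma two_paths {V : Type*} {A : V → V → Prop} (hgeo : IsKGeodetic A 2)
    {a b c d : V} (hbc : b ≠ c) (h1 : A a b) (h2 : A b d) (h3 : A a c) (h4 : A c d) :
    False := by
  have := hgeo [a, b, d] [a, c, d] ⟨by simp, by simp [List.Chain', h1, h2]⟩ ⟨by simp, by simp [List.Chain', h3, h4]⟩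
    rfl rfl (by simp) (by simp)
  simp at this
  exact hbc this

lemma tri_cyc {V : Type*} {G : SimpleGraph V} {A : V → V → Prop}
    (horient : ∀ u v, G.Adj u v ↔ (A u v ∨ A v u)) (hgeo : IsKGeodetic A 2)
    {a b c : V} (hab : A a b) (hbc : G.Adj b c) (hca : G.Adj c a) :
    A b c ∧ A c a := by
  rcases (horient b c).1 hbc with h1 | h1 <;> rcases (horient c a).1 hca with h2 | h2
  · exact ⟨h1, h2⟩
  · exact absurd h2 fun h2 => no_shortcut hgeo hab h1 h2
  · exact absurd h2 fun _ => no_shortcut hgeo h2 hab h1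
  · exact absurd h2 fun h2 => no_shortcut hgeo h2 h1 hab

/-- If a simple graph admits a 2-geodetic orientation then no two distinct triangles
of it share an edge (i.e. it is diamond-free). -/
theorem stmt4 {V : Type*} (G : SimpleGraph V) (A : V → V → Prop)
    (horient : ∀ u v, G.Adj u v ↔ (A u v ∨ A v u))
    (hanti : ∀ u v, A u v → ¬ A v u)
    (hgeo : IsKGeodetic A 2) :
    ∀ x y z z' : V, z ≠ z' →
      G.Adj x y → G.Adj y z → G.Adj z x → G.Adj y z' → G.Adj z' x → False := by
  intro x y z z' hzz' hxy hyz hzx hyz' hz'x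
  rcases (horient x y).1 hxy with h | h
  · obtain ⟨h1, h2⟩ := tri_cyc horient hgeo h hyz hzx
    obtain ⟨h3, h4⟩ := tri_cyc horient hgeo h hyz' hz'x
    exact two_paths hgeo hzz' h1 h2 h3 h4
  · obtain ⟨h1, h2⟩ := tri_cyc horient hgeo h hzx.symm hyz.symm
    obtain ⟨h3, h4⟩ := tri_cyc horient hgeo h hz'x.symm hyz'.symm
    exact two_paths hgeo hzz' h1 h2 h3 h4
end

section
/- Let K be a 2-geodetic orientation of the complete bipartite graph K_{s,t} with partite sets X and Y, where s ≥ t ≥ 2. If x is any vertex of K that is neither a source nor a sink, then the out-degree of x equals 1 or the in-degree of x equals 1. -/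
private lemma mid_eq {V : Type*} {A : V → V → Prop} (hgeo : IsKGeodetic A 2)
    {c d d' e : V} (h1 : A c d) (h2 : A d e) (h3 : A c d') (h4 : A d' e) : d = d' := by
  have := hgeo [c, d, e] [c, d', e]
    ⟨by simp, by simp [List.Chain', List.isChain_cons_cons, h1, h2]⟩
    ⟨by simp, by simp [List.Chain', List.isChain_cons_cons, h3, h4]⟩
    rfl (by simp) (by simp) (by simp)
  simpa using this

private lemma aux_core {V : Type*} {A : V → V → Prop} (hgeo : IsKGeodetic A 2)
    {x w a1 a2 u1 u2 : V} (hw : w ≠ x) (ha : a1 ≠ a2) (hu : u1 ≠ u2)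
    (hxa1 : A x a1) (hxa2 : A x a2) (hu1 : A u1 x) (hu2 : A u2 x)
    (t1 : A a1 w ∨ A w a1) (t2 : A a2 w ∨ A w a2)
    (t3 : A u1 w ∨ A w u1) (t4 : A u2 w ∨ A w u2) : False := by
  -- if some u → w, then both a's must point to w, contradiction
  have key : ∀ u : V, A u x → A u w → False := by
    intro u hux huw
    have haw1 : A a1 w := by
      rcases t1 with h | h
      · exact h
      · exact absurd (mid_eq hgeo huw h hux hxa1) hw
    have haw2 : A a2 w := by
      rcases t2 with h | h
      · exact h
      · exact absurd (mid_eq hgeo huw h hux hxa2) hw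
    exact ha (mid_eq hgeo hxa1 haw1 hxa2 haw2)
  rcases t3 with h3 | h3
  · exact key u1 hu1 h3
  rcases t4 with h4 | h4
  · exact key u2 hu2 h4
  exact hu (mid_eq hgeo h3 hu1 h4 hu2)

private lemma two_of_card {α : Type*} [Finite α] (h0 : Nat.card α ≠ 0)
    (h1 : Nat.card α ≠ 1) : ∃ a b : α, a ≠ b := by
  have : 1 < Nat.card α := by omega
  have : Nontrivial α := Finite.one_lt_card_iff_nontrivial.mp this
  exact exists_pair_ne α

/-- In a 2-geodetic orientation of `K_{s,t}` with `s ≥ t ≥ 2`, every vertex that is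
neither a source nor a sink has out-degree 1 or in-degree 1. -/
theorem stmt6 (s t : ℕ) (hst : t ≤ s) (ht : 2 ≤ t)
    (A : Fin s ⊕ Fin t → Fin s ⊕ Fin t → Prop)
    (hbip : IsCompleteBipOrientation s t A)
    (hgeo : IsKGeodetic A 2)
    (x : Fin s ⊕ Fin t) (hnsource : inDeg A x ≠ 0) (hnsink : outDeg A x ≠ 0) :
    outDeg A x = 1 ∨ inDeg A x = 1 := by
  by_contra hcon
  push_neg at hcon
  obtain ⟨hout1, hin1⟩ := hcon
  obtain ⟨a1, a2, ha⟩ := two_of_card (α := {w // A x w}) hnsink hout1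
  obtain ⟨u1, u2, hu⟩ := two_of_card (α := {w // A w x}) hnsource hin1
  have ha' : a1.1 ≠ a2.1 := fun h => ha (Subtype.ext h)
  have hu' : u1.1 ≠ u2.1 := fun h => hu (Subtype.ext h)
  have hs : 2 ≤ s := ht.trans hst
  -- classify a vertex adjacent to a given side
  cases x with
  | inl xs =>
    -- out/in neighbors of .inl xs are .inr _
    have hform : ∀ v : Fin s ⊕ Fin t, (A (.inl xs) v ∨ A v (.inl xs)) → ∃ y, v = .inr y := by
      intro v hv
      cases v with
      | inl x' =>
        rcases hv with h | h
        · exact absurd h (hbip.2.1 xs x')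
        · exact absurd h (hbip.2.1 x' xs)
      | inr y => exact ⟨y, rfl⟩
    obtain ⟨y1, hy1⟩ := hform a1.1 (Or.inl a1.2)
    obtain ⟨y2, hy2⟩ := hform a2.1 (Or.inl a2.2)
    obtain ⟨z1, hz1⟩ := hform u1.1 (Or.inr u1.2)
    obtain ⟨z2, hz2⟩ := hform u2.1 (Or.inr u2.2)
    haveI : Nontrivial (Fin s) := Fin.nontrivial_iff_two_le.mpr hs
    obtain ⟨xs', hxs'⟩ := exists_ne xs
    have tot : ∀ y : Fin t, A (.inr y) (.inl xs') ∨ A (.inl xs') (.inr y) := by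
      intro y
      exact (hbip.1 xs' y).1.symm
    exact aux_core hgeo (x := Sum.inl xs) (w := Sum.inl xs')
      (by simp [hxs']) (hy1 ▸ hy2 ▸ ha') (hz1 ▸ hz2 ▸ hu')
      (hy1 ▸ a1.2) (hy2 ▸ a2.2) (hz1 ▸ u1.2) (hz2 ▸ u2.2)
      (hy1 ▸ tot y1) (hy2 ▸ tot y2) (hz1 ▸ tot z1) (hz2 ▸ tot z2)
  | inr ys =>
    have hform : ∀ v : Fin s ⊕ Fin t, (A (.inr ys) v ∨ A v (.inr ys)) → ∃ y, v = .inl y := by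
      intro v hv
      cases v with
      | inr y' =>
        rcases hv with h | h
        · exact absurd h (hbip.2.2 ys y')
        · exact absurd h (hbip.2.2 y' ys)
      | inl y => exact ⟨y, rfl⟩
    obtain ⟨y1, hy1⟩ := hform a1.1 (Or.inl a1.2)
    obtain ⟨y2, hy2⟩ := hform a2.1 (Or.inl a2.2)
    obtain ⟨z1, hz1⟩ := hform u1.1 (Or.inr u1.2)
    obtain ⟨z2, hz2⟩ := hform u2.1 (Or.inr u2.2)
    haveI : Nontrivial (Fin t) := Fin.nontrivial_iff_two_le.mpr ht
    obtain ⟨ys', hys'⟩ := exists_ne ys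
    have tot : ∀ y : Fin s, A (.inl y) (.inr ys') ∨ A (.inr ys') (.inl y) := by
      intro y
      exact (hbip.1 y ys').1
    exact aux_core hgeo (x := Sum.inr ys) (w := Sum.inr ys')
      (by simp [hys']) (hy1 ▸ hy2 ▸ ha') (hz1 ▸ hz2 ▸ hu')
      (hy1 ▸ a1.2) (hy2 ▸ a2.2) (hz1 ▸ u1.2) (hz2 ▸ u2.2)
      (hy1 ▸ tot y1) (hy2 ▸ tot y2) (hz1 ▸ tot z1) (hz2 ▸ tot z2)
end

section
/- Let K be a 2-geodetic orientation of the complete bipartite graph K_{s,t} with s ≥ t ≥ 2. Then all arcs of K are oriented in the same direction (say from X to Y), except possibly for a set of arcs in the opposite direction that forms a matching (possibly empty). -/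
/-- In a 2-geodetic digraph, a walk `u → a → v` and a walk `u → b → v` must coincide. -/
lemma two_paths_aux {V : Type*} {A : V → V → Prop} (hgeo : IsKGeodetic A 2) {u a b v : V}
    (h1 : A u a) (h2 : A a v) (h3 : A u b) (h4 : A b v) : a = b := by
  have := hgeo [u, a, v] [u, b, v] ⟨by simp, by simp [List.Chain', h1, h2]⟩ ⟨by simp, by simp [List.Chain', h3, h4]⟩
    rfl (by simp) (by simp) (by simp)
  simpa using this

/-- Abstract reduction: two "backward" arcs into the same endpoint yield two backward
arcs out of the same endpoint. -/
lemma reduce_aux {X Y : Type*} (F : X → Y → Prop) (B : Y → X → Prop)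
    (total : ∀ x y, F x y ∨ B y x)
    (geoX : ∀ (x x' : X) (y y' : Y), F x y → B y x' → F x y' → B y' x' → y = y')
    (hX : Nontrivial X)
    {y₁ y₂ : Y} {x₀ : X} (hne : y₁ ≠ y₂) (h1 : B y₁ x₀) (h2 : B y₂ x₀) :
    ∃ (y₀ : Y) (x₁ x₂ : X), x₁ ≠ x₂ ∧ B y₀ x₁ ∧ B y₀ x₂ := by
  obtain ⟨x₁, hx⟩ := exists_ne x₀
  have hb : B y₁ x₁ ∨ B y₂ x₁ := by
    rcases total x₁ y₁ with h | h
    · rcases total x₁ y₂ with h' | h'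
      · exact absurd (geoX x₁ x₀ y₁ y₂ h h1 h' h2) hne
      · exact Or.inr h'
    · exact Or.inl h
  rcases hb with h | h
  · exact ⟨y₁, x₁, x₀, hx, h, h1⟩
  · exact ⟨y₂, x₁, x₀, hx, h, h2⟩

/-- Abstract core contradiction. -/
lemma core_aux {X Y : Type*} (F : X → Y → Prop) (B : Y → X → Prop)
    (total : ∀ x y, F x y ∨ B y x)
    (asymm : ∀ x y, ¬(F x y ∧ B y x))
    (geoX : ∀ (x x' : X) (y y' : Y), F x y → B y x' → F x y' → B y' x' → y = y')
    (geoY : ∀ (y y' : Y) (x x' : X), B y x → F x y' → B y x' → F x' y' → x = x')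
    {y₀ : Y} {x₁ x₂ : X} (hx12 : x₁ ≠ x₂) (hb1 : B y₀ x₁) (hb2 : B y₀ x₂)
    {x₀ : X} {y₁ y₂ : Y} (hy12 : y₁ ≠ y₂) (hf1 : F x₀ y₁) (hf2 : F x₀ y₂)
    (h : F x₁ y₁) : False := by
  -- every y sends a backward arc to x₁ or x₂
  have F1 : ∀ y, B y x₁ ∨ B y x₂ := by
    intro y
    rcases total x₁ y with h1 | h1
    · rcases total x₂ y with h2 | h2
      · exact absurd (geoY y₀ y x₁ x₂ hb1 h1 hb2 h2) hx12
      · exact Or.inr h2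
    · exact Or.inl h1
  -- every x sends a forward arc to y₁ or y₂
  have F2 : ∀ x, F x y₁ ∨ F x y₂ := by
    intro x
    rcases total x y₁ with h1 | h1
    · exact Or.inl h1
    · rcases total x y₂ with h2 | h2
      · exact Or.inr h2
      · exact absurd (geoX x₀ x y₁ y₂ hf1 h1 hf2 h2) hy12
  -- chase forced arcs
  have hb3 : B y₁ x₂ := (F1 y₁).resolve_left (fun hb => asymm x₁ y₁ ⟨h, hb⟩)
  have hf3 : F x₂ y₂ := (F2 x₂).resolve_left (fun hf => asymm x₂ y₁ ⟨hf, hb3⟩)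
  have hb4 : B y₂ x₁ := (F1 y₂).resolve_right (fun hb => asymm x₂ y₂ ⟨hf3, hb⟩)
  rcases total x₀ y₀ with h0 | h0
  · -- x₀ → y₀ : two walks x₀ → x₂ (via y₀ and y₁), and x₀ → x₁ (via y₀ and y₂)
    have e1 : y₀ = y₁ := geoX x₀ x₂ y₀ y₁ h0 hb2 hf1 hb3
    have e2 : y₀ = y₂ := geoX x₀ x₁ y₀ y₂ h0 hb1 hf2 hb4
    exact hy12 (e1 ▸ e2)
  · -- y₀ → x₀ : two walks y₀ → y₁ (via x₀ and x₁), and y₀ → y₂ (via x₀ and x₂)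
    have e1 : x₀ = x₁ := geoY y₀ y₁ x₀ x₁ h0 hf1 hb1 h
    have e2 : x₀ = x₂ := geoY y₀ y₂ x₀ x₂ h0 hf2 hb2 hf3
    exact hx12 (e1 ▸ e2)

/-- In a 2-geodetic orientation of `K_{s,t}` with `s ≥ t ≥ 2`, all arcs go in the same
direction except possibly for a matching in the opposite direction: the set of arcs
from `Y` to `X` forms a matching, or the set of arcs from `X` to `Y` forms a matching. -/
theorem stmt7 (s t : ℕ) (hst : t ≤ s) (ht : 2 ≤ t)
    (A : Fin s ⊕ Fin t → Fin s ⊕ Fin t → Prop)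
    (hbip : IsCompleteBipOrientation s t A)
    (hgeo : IsKGeodetic A 2) :
    (∀ (x x' : Fin s) (y y' : Fin t),
        A (.inr y) (.inl x) → A (.inr y') (.inl x') → (x = x' ↔ y = y')) ∨
    (∀ (x x' : Fin s) (y y' : Fin t),
        A (.inl x) (.inr y) → A (.inl x') (.inr y') → (x = x' ↔ y = y')) := by
  classical
  set F : Fin s → Fin t → Prop := fun x y => A (.inl x) (.inr y) with hF
  set B : Fin t → Fin s → Prop := fun y x => A (.inr y) (.inl x) with hB
  have total : ∀ x y, F x y ∨ B y x := fun x y => (hbip.1 x y).1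
  have asymm : ∀ x y, ¬(F x y ∧ B y x) := fun x y => (hbip.1 x y).2
  have geoX : ∀ (x x' : Fin s) (y y' : Fin t), F x y → B y x' → F x y' → B y' x' → y = y' := by
    intro x x' y y' h1 h2 h3 h4
    have := two_paths_aux hgeo h1 h2 h3 h4
    simpa using this
  have geoY : ∀ (y y' : Fin t) (x x' : Fin s), B y x → F x y' → B y x' → F x' y' → x = x' := by
    intro y y' x x' h1 h2 h3 h4
    have := two_paths_aux hgeo h1 h2 h3 h4
    simpa using this
  have hX : Nontrivial (Fin s) := by
    refine ⟨⟨0, by omega⟩, ⟨1, by omega⟩, ?_⟩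
    simp [Fin.ext_iff]
  have hY : Nontrivial (Fin t) := by
    refine ⟨⟨0, by omega⟩, ⟨1, by omega⟩, ?_⟩
    simp [Fin.ext_iff]
  by_contra hcon
  push_neg at hcon
  obtain ⟨hc1, hc2⟩ := hcon
  -- from failure of the backward matching, get y₀ with two backward arcs
  obtain ⟨xa, xa', ya, ya', ha1, ha2, ha3⟩ := hc1
  have hiv : ∃ (y₀ : Fin t) (x₁ x₂ : Fin s), x₁ ≠ x₂ ∧ B y₀ x₁ ∧ B y₀ x₂ := by
    rcases ha3 with ⟨hxx, hyy⟩ | ⟨hxx, hyy⟩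
    · subst hxx
      exact reduce_aux F B total geoX hX hyy ha1 ha2
    · subst hyy
      exact ⟨ya, xa, xa', hxx, ha1, ha2⟩
  -- from failure of the forward matching, get x₀ with two forward arcs
  obtain ⟨xb, xb', yb, yb', hb1, hb2, hb3⟩ := hc2
  have hi : ∃ (x₀ : Fin s) (y₁ y₂ : Fin t), y₁ ≠ y₂ ∧ F x₀ y₁ ∧ F x₀ y₂ := by
    rcases hb3 with ⟨hxx, hyy⟩ | ⟨hxx, hyy⟩
    · subst hxx
      exact ⟨xb, yb, yb', hyy, hb1, hb2⟩
    · subst hyy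
      exact reduce_aux B F (fun y x => (total x y).symm)
        (fun y y' x x' h1 h2 h3 h4 => geoY y y' x x' h1 h2 h3 h4) hY hxx hb1 hb2
  obtain ⟨y₀, x₁, x₂, hx12, hbb1, hbb2⟩ := hiv
  obtain ⟨x₀, y₁, y₂, hy12, hff1, hff2⟩ := hi
  by_cases hcase : F x₁ y₁
  · exact core_aux F B total asymm geoX geoY hx12 hbb1 hbb2 hy12 hff1 hff2 hcase
  · have hb : B y₁ x₁ := (total x₁ y₁).resolve_left hcase
    have hcase2 : F x₁ y₂ := by
      rcases total x₁ y₂ with h | h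
      · exact h
      · exact absurd (geoX x₀ x₁ y₁ y₂ hff1 hb hff2 h) hy12
    exact core_aux F B total asymm geoX geoY hx12 hbb1 hbb2 hy12.symm hff2 hff1 hcase2
end

section
/- In a 2-geodetic orientation of a complete bipartite graph with partite sets X and Y where |Y| ≥ 2, the set X cannot contain both a source and a sink. -/
/-- In a 2-geodetic orientation of a complete bipartite graph whose other side `Y` has
at least two vertices, the side `X` cannot contain both a source and a sink. -/
theorem stmt8 (s t : ℕ) (ht : 2 ≤ t)
    (A : Fin s ⊕ Fin t → Fin s ⊕ Fin t → Prop)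
    (hbip : IsCompleteBipOrientation s t A)
    (hgeo : IsKGeodetic A 2) :
    ¬ ∃ x₁ x₂ : Fin s, inDeg A (.inl x₁) = 0 ∧ outDeg A (.inl x₂) = 0 := by
  rintro ⟨x₁, x₂, h1, h2⟩
  -- no arcs into x₁
  have hin : ∀ w, ¬ A w (.inl x₁) := by
    intro w hw
    have : Nat.card {w : Fin s ⊕ Fin t // A w (.inl x₁)} ≠ 0 :=
      Nat.card_ne_zero.mpr ⟨⟨⟨w, hw⟩⟩, inferInstance⟩
    exact this h1
  have hout : ∀ w, ¬ A (.inl x₂) w := by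
    intro w hw
    have : Nat.card {w : Fin s ⊕ Fin t // A (.inl x₂) w} ≠ 0 :=
      Nat.card_ne_zero.mpr ⟨⟨⟨w, hw⟩⟩, inferInstance⟩
    exact this h2
  have hx1 : ∀ y : Fin t, A (.inl x₁) (.inr y) := fun y =>
    ((hbip.1 x₁ y).1).resolve_right (hin _)
  have hx2 : ∀ y : Fin t, A (.inr y) (.inl x₂) := fun y =>
    ((hbip.1 x₂ y).1).resolve_left (hout _)
  have y0 : Fin t := ⟨0, by omega⟩
  have y1 : Fin t := ⟨1, by omega⟩
  set p : List (Fin s ⊕ Fin t) := [.inl x₁, .inr ⟨0, by omega⟩, .inl x₂]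
  set q : List (Fin s ⊕ Fin t) := [.inl x₁, .inr ⟨1, by omega⟩, .inl x₂]
  have hp : IsWalk A p := ⟨by simp [p], by simp [p, List.Chain', List.isChain_cons_cons, hx1, hx2]⟩
  have hq : IsWalk A q := ⟨by simp [q], by simp [q, List.Chain', List.isChain_cons_cons, hx1, hx2]⟩
  have := hgeo p q hp hq rfl rfl (by simp [p]) (by simp [q])
  simp [p, q, Fin.ext_iff] at this
end

section
/- In a k-geodetic digraph with no sinks, every vertex has out-degree strictly less than n/k, where n is the number of vertices. -/
/-- auxiliary: iterate list -/
def iterList {V : Type*} (f : V → V) : ℕ → V → List V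
  | 0, w => [w]
  | m + 1, w => w :: iterList f m (f w)

lemma iterList_ne_nil {V : Type*} (f : V → V) (m : ℕ) (w : V) : iterList f m w ≠ [] := by
  cases m <;> simp [iterList]

lemma iterList_length {V : Type*} (f : V → V) (m : ℕ) (w : V) :
    (iterList f m w).length = m + 1 := by
  induction m generalizing w with
  | zero => simp [iterList]
  | succ m ih => simp [iterList, ih]

lemma iterList_head? {V : Type*} (f : V → V) (m : ℕ) (w : V) :
    (iterList f m w).head? = some w := by
  cases m <;> simp [iterList]

lemma getLast?_cons_ne_nil {V : Type*} (a : V) (l : List V) (h : l ≠ []) :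
    (a :: l).getLast? = l.getLast? := by
  cases l with
  | nil => exact absurd rfl h
  | cons b t => exact List.getLast?_cons_cons

lemma iterList_getLast? {V : Type*} (f : V → V) (m : ℕ) (w : V) :
    (iterList f m w).getLast? = some (f^[m] w) := by
  induction m generalizing w with
  | zero => simp [iterList]
  | succ m ih =>
      rw [iterList, getLast?_cons_ne_nil _ _ (iterList_ne_nil f m (f w)), ih,
        Function.iterate_succ_apply]

lemma iterList_chain {V : Type*} (A : V → V → Prop) (f : V → V)
    (hf : ∀ u, A u (f u)) (m : ℕ) (w u : V) (h : A u w) :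
    List.Chain A u (iterList f m w) := by
  induction m generalizing w u with
  | zero => simpa only [iterList] using List.Chain.cons h List.Chain.nil
  | succ m ih =>
      rw [iterList]
      exact List.Chain.cons h (ih (f w) w (hf w))

/-- In a `k`-geodetic digraph with no sinks, every vertex has out-degree strictly
less than `n/k`. -/
theorem stmt12 {V : Type*} [Fintype V] (k : ℕ) (hk : 1 ≤ k)
    (A : V → V → Prop) (hgeo : IsKGeodetic A k)
    (hnosink : ∀ v, outDeg A v ≠ 0) (v : V) :
    (outDeg A v : ℝ) < (Fintype.card V : ℝ) / k := by
  classical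
  have hf : ∀ u : V, ∃ w, A u w := by
    intro u
    by_contra h
    push_neg at h
    apply hnosink u
    have : IsEmpty {w // A u w} := ⟨fun ⟨w, hw⟩ => h w hw⟩
    simp [outDeg, Nat.card_of_isEmpty]
  choose f hf using hf
  -- the walk of m+1 arcs from v through w
  set W : ℕ → V → List V := fun m w => v :: iterList f m w with hW
  have hWwalk : ∀ m (w : V), A v w → IsWalk A (W m w) := by
    intro m w h
    refine ⟨by simp [hW], ?_⟩
    rw [hW]
    exact iterList_chain A f hf m w v h
  have hWhead : ∀ m (w : V), (W m w).head? = some v := by intro m w; simp [hW]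
  have hWlast : ∀ m (w : V), (W m w).getLast? = some (f^[m] w) := by
    intro m w
    rw [hW]
    rw [getLast?_cons_ne_nil _ _ (iterList_ne_nil f m w), iterList_getLast?]
  have hWlen : ∀ m (w : V), (W m w).length = m + 2 := by
    intro m w; simp [hW, iterList_length]
  -- the injective map
  let g : Option (Fin k × {w : V // A v w}) → V := fun o =>
    match o with
    | none => v
    | some p => f^[p.1.val] p.2.val
  have hginj : Function.Injective g := by
    rintro (_ | ⟨i, w, hw⟩) (_ | ⟨j, w', hw'⟩) hgv
    · rfl
    · -- v = endpoint: contradiction with trivial walk [v]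
      exfalso
      have h1 : IsWalk A [v] := ⟨by simp, List.isChain_singleton v⟩
      have h2 := hWwalk j.val w' hw'
      have := hgeo [v] (W j.val w') h1 h2 (by simp [hWhead]) (by
          rw [hWlast]; simpa using hgv) (by simp) (by rw [hWlen]; omega)
      have := congrArg List.length this
      rw [hWlen] at this
      simp at this
    · exfalso
      have h1 : IsWalk A [v] := ⟨by simp, List.isChain_singleton v⟩
      have h2 := hWwalk i.val w hw
      have := hgeo (W i.val w) [v] h2 h1 (by simp [hWhead]) (by
          rw [hWlast]; simpa using hgv) (by rw [hWlen]; omega) (by simp)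
      have := congrArg List.length this
      rw [hWlen] at this
      simp at this
    · -- both some
      have h1 := hWwalk i.val w hw
      have h2 := hWwalk j.val w' hw'
      have heq := hgeo (W i.val w) (W j.val w') h1 h2
        (by rw [hWhead, hWhead])
        (by rw [hWlast, hWlast]; exact congrArg some hgv)
        (by rw [hWlen]; omega) (by rw [hWlen]; omega)
      have hlen := congrArg List.length heq
      rw [hWlen, hWlen] at hlen
      have hij : i = j := Fin.ext (by omega)
      have htail : iterList f i.val w = iterList f j.val w' := by
        simpa [hW] using heq
      have hww : w = w' := by
        have h3 := congrArg List.head? htail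
        rw [iterList_head?, iterList_head?] at h3
        exact Option.some.inj h3
      subst hij; subst hww; rfl
  have hcard : k * outDeg A v + 1 ≤ Fintype.card V := by
    have := Fintype.card_le_of_injective g hginj
    simpa [outDeg, Nat.card_eq_fintype_card, mul_comm, add_comm] using this
  have hk0 : (0 : ℝ) < (k : ℝ) := by exact_mod_cast hk
  rw [lt_div_iff₀ hk0]
  have : outDeg A v * k < Fintype.card V := by
    calc outDeg A v * k = k * outDeg A v := mul_comm _ _
    _ < k * outDeg A v + 1 := Nat.lt_succ_self _
    _ ≤ Fintype.card V := hcard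
  exact_mod_cast this
end

section
/- For r ≥ 2 and k ≥ 2, the digraph G(kr,k) on vertex set {u_{i,j} : 1 ≤ i ≤ r, 1 ≤ j ≤ k} with arcs u_{i,j} → u_{i,j+1} for 2 ≤ j ≤ k−1, u_{i,1} → u_{i',2} for all i ≠ i', and u_{i,k} → u_{i,1}, is a strongly connected k-geodetic digraph on n = kr vertices with r² + (k−2)r arcs. -/
namespace Stmt13Aux

variable {r k : ℕ}

def Arel (r k : ℕ) (p q : Fin r × Fin k) : Prop :=
  (p.1 = q.1 ∧ 1 ≤ (p.2 : ℕ) ∧ (p.2 : ℕ) ≤ k - 2 ∧ (q.2 : ℕ) = (p.2 : ℕ) + 1) ∨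
  (p.1 ≠ q.1 ∧ (p.2 : ℕ) = 0 ∧ (q.2 : ℕ) = 1) ∨
  (p.1 = q.1 ∧ (p.2 : ℕ) = k - 1 ∧ (q.2 : ℕ) = 0)

instance : ∀ u v : Fin r × Fin k, Decidable (Arel r k u v) := fun u v => by
  unfold Arel; infer_instance

lemma level_step (hk : 2 ≤ k) {u v : Fin r × Fin k} (h : Arel r k u v) :
    (v.2 : ℕ) = ((u.2 : ℕ) + 1) % k := by
  have hu : (u.2 : ℕ) < k := u.2.isLt
  rcases h with ⟨_, h1, h2, h3⟩ | ⟨_, h1, h2⟩ | ⟨_, h1, h2⟩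
  · rw [Nat.mod_eq_of_lt (by omega)]; omega
  · rw [h1, Nat.mod_eq_of_lt (by omega)]; omega
  · rw [h1]
    have : k - 1 + 1 = k := by omega
    rw [this, Nat.mod_self, h2]

lemma row_step {u v : Fin r × Fin k} (h : Arel r k u v) (h0 : (u.2 : ℕ) ≠ 0) :
    v.1 = u.1 := by
  rcases h with ⟨h1, _⟩ | ⟨_, h1, _⟩ | ⟨h1, _⟩
  · exact h1.symm
  · exact absurd h1 h0
  · exact h1.symm

lemma step_zero (hk : 2 ≤ k) {u v : Fin r × Fin k} (h : Arel r k u v) (h0 : (u.2 : ℕ) = 0) :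
    v.1 ≠ u.1 ∧ (v.2 : ℕ) = 1 := by
  rcases h with ⟨_, h1, _⟩ | ⟨h1, _, h2⟩ | ⟨_, h1, _⟩
  · omega
  · exact ⟨(Ne.symm h1), h2⟩
  · omega

lemma step_det (hk : 2 ≤ k) {u v w : Fin r × Fin k} (hv : Arel r k u v) (hw : Arel r k u w)
    (h0 : (u.2 : ℕ) ≠ 0) : v = w := by
  have hrv := row_step hv h0
  have hrw := row_step hw h0
  have hlv := level_step hk hv
  have hlw := level_step hk hw
  have h1 : v.1 = w.1 := hrv.trans hrw.symm
  have h2 : v.2 = w.2 := Fin.ext (by omega)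
  exact Prod.ext h1 h2

/-- level of the last vertex of the walk `u :: l`. -/
lemma walk_level (hk : 2 ≤ k) :
    ∀ (l : List (Fin r × Fin k)) (u), List.Chain' (Arel r k) (u :: l) →
      ((l.getLastD u).2 : ℕ) = ((u.2 : ℕ) + l.length) % k := by
  intro l
  induction l with
  | nil => intro u _; simp [Nat.mod_eq_of_lt u.2.isLt]
  | cons b t ih =>
    intro u hc
    rw [show List.Chain' _ _ ↔ _ from List.isChain_cons_cons] at hc
    rw [List.getLastD_cons]
    rw [ih b hc.2, level_step hk hc.1]
    simp only [List.length_cons]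
    rw [Nat.mod_add_mod]
    ring_nf

lemma walk_samerow (hk : 2 ≤ k) :
    ∀ (l : List (Fin r × Fin k)) (u), List.Chain' (Arel r k) (u :: l) →
      1 ≤ (u.2 : ℕ) → (u.2 : ℕ) + l.length ≤ k → (l.getLastD u).1 = u.1 := by
  intro l
  induction l with
  | nil => intro u _ _ _; rfl
  | cons b t ih =>
    intro u hc h1 h2
    rw [show List.Chain' _ _ ↔ _ from List.isChain_cons_cons] at hc
    rw [List.getLastD_cons]
    simp only [List.length_cons] at h2
    have hb := row_step hc.1 (by omega)
    have hbl := level_step hk hc.1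
    rcases Nat.lt_or_ge ((u.2 : ℕ) + 1) k with h | h
    · rw [Nat.mod_eq_of_lt h] at hbl
      rw [ih b hc.2 (by omega) (by omega), hb]
    · -- u.2 + 1 = k, so t must be empty
      have hu : (u.2 : ℕ) < k := u.2.isLt
      have ht : t = [] := by
        rcases t with _ | _
        · rfl
        · exfalso; simp at h2; omega
      subst ht
      simpa using hb

lemma walk_diffrow (hk : 2 ≤ k) :
    ∀ (l : List (Fin r × Fin k)) (u), List.Chain' (Arel r k) (u :: l) →
      l.length ≤ k →
      ((u.2 : ℕ) = 0 ∧ 1 ≤ l.length ∨ 1 ≤ (u.2 : ℕ) ∧ k + 1 ≤ (u.2 : ℕ) + l.length) →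
      (l.getLastD u).1 ≠ u.1 := by
  intro l
  induction l with
  | nil => intro u _ _ h; simp at h; omega
  | cons b t ih =>
    intro u hc hlen hcase
    rw [show List.Chain' _ _ ↔ _ from List.isChain_cons_cons] at hc
    rw [List.getLastD_cons]
    simp only [List.length_cons] at hlen hcase
    have hu : (u.2 : ℕ) < k := u.2.isLt
    rcases hcase with ⟨h0, _⟩ | ⟨h1, h2⟩
    · obtain ⟨hne, hb1⟩ := step_zero hk hc.1 h0
      rw [walk_samerow hk t b hc.2 (by omega) (by omega)]
      exact hne
    · have hb := row_step hc.1 (by omega)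
      have hbl := level_step hk hc.1
      rcases Nat.lt_or_ge ((u.2 : ℕ) + 1) k with h | h
      · rw [Nat.mod_eq_of_lt h] at hbl
        rw [← hb]
        exact ih b hc.2 (by omega) (Or.inr ⟨by omega, by omega⟩)
      · -- b is at level 0
        have hb0 : (b.2 : ℕ) = 0 := by
          have : (u.2 : ℕ) + 1 = k := by omega
          rw [this, Nat.mod_self] at hbl; exact hbl
        rw [← hb]
        exact ih b hc.2 (by omega) (Or.inl ⟨hb0, by omega⟩)

lemma walk_unique (hk : 2 ≤ k) :
    ∀ (n : ℕ) (u : Fin r × Fin k) (p q : List (Fin r × Fin k)),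
      List.Chain' (Arel r k) (u :: p) → List.Chain' (Arel r k) (u :: q) →
      p.length = n → q.length = n → n ≤ k → p.getLastD u = q.getLastD u → p = q := by
  intro n
  induction n with
  | zero =>
    intro u p q _ _ hp hq _ _
    rw [List.length_eq_zero_iff] at hp hq; rw [hp, hq]
  | succ n ih =>
    intro u p q hcp hcq hp hq hn hlast
    rcases p with _ | ⟨b, p'⟩; · simp at hp
    rcases q with _ | ⟨c, q'⟩; · simp at hq
    rw [show List.Chain' _ _ ↔ _ from List.isChain_cons_cons] at hcp hcq
    simp only [List.length_cons] at hp hq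
    rw [List.getLastD_cons, List.getLastD_cons] at hlast
    have hbc : b = c := by
      rcases Nat.eq_zero_or_pos (u.2 : ℕ) with h0 | h0
      · obtain ⟨hbne, hb1⟩ := step_zero hk hcp.1 h0
        obtain ⟨hcne, hc1⟩ := step_zero hk hcq.1 h0
        have hb : (p'.getLastD b).1 = b.1 :=
          walk_samerow hk p' b hcp.2 (by omega) (by omega)
        have hc : (q'.getLastD c).1 = c.1 :=
          walk_samerow hk q' c hcq.2 (by omega) (by omega)
        have : b.1 = c.1 := by rw [← hb, ← hc, hlast]
        exact Prod.ext this (Fin.ext (by omega))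
      · exact step_det hk hcp.1 hcq.1 (by omega)
    subst hbc
    rw [ih b p' q' hcp.2 hcq.2 (by omega) (by omega) (by omega) hlast]

variable {r k : ℕ}

abbrev Reaches (r k : ℕ) := Relation.ReflTransGen (Arel r k)

lemma climb (hk : 2 ≤ k) (i : Fin r) :
    ∀ (d j : ℕ) (hj : 1 ≤ j) (hd : j + d ≤ k - 1),
      Reaches r k (i, ⟨j, by omega⟩) (i, ⟨j + d, by omega⟩) := by
  intro d
  induction d with
  | zero => intro j hj hd; exact Relation.ReflTransGen.refl
  | succ d ih =>
    intro j hj hd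
    refine Relation.ReflTransGen.head ?_ (by have := ih (j+1) (by omega) (by omega); convert this using 3 <;> omega)
    exact Or.inl ⟨rfl, by simpa using hj, by simp; omega, by simp⟩

lemma reach_from0 (hk : 2 ≤ k) (i i' : Fin r) (hne : i ≠ i') (j' : Fin k) (hj' : 1 ≤ (j' : ℕ)) :
    Reaches r k (i, ⟨0, by omega⟩) (i', j') := by
  refine Relation.ReflTransGen.head (b := (i', ⟨1, by omega⟩)) (Or.inr (Or.inl ⟨by simpa using hne, rfl, rfl⟩)) ?_
  have := climb hk i' (j' - 1) 1 le_rfl (by have := j'.isLt; omega)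
  convert this using 2
  exact Fin.ext (by simp; omega)

lemma reach00 (hk : 2 ≤ k) (i i' : Fin r) (hne : i ≠ i') :
    Reaches r k (i, ⟨0, by omega⟩) (i', ⟨0, by omega⟩) := by
  refine (reach_from0 hk i i' hne ⟨k - 1, by omega⟩ (by simp; omega)).tail ?_
  exact Or.inr (Or.inr ⟨rfl, by simp, rfl⟩)

lemma reach_to0 (hk : 2 ≤ k) (u : Fin r × Fin k) :
    Reaches r k u (u.1, ⟨0, by omega⟩) := by
  rcases Nat.eq_zero_or_pos (u.2 : ℕ) with h0 | h0
  · have : u = (u.1, ⟨0, by omega⟩) := Prod.ext rfl (Fin.ext h0)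
    rw [← this]
  · have hu : (u.2 : ℕ) < k := u.2.isLt
    have h1 : Reaches r k (u.1, ⟨(u.2 : ℕ), hu⟩) (u.1, ⟨k - 1, by omega⟩) := by
      have := climb hk u.1 (k - 1 - (u.2 : ℕ)) (u.2 : ℕ) h0 (by omega)
      convert this using 3
      omega
    have h2 : u = (u.1, ⟨(u.2 : ℕ), hu⟩) := Prod.ext rfl (Fin.ext rfl)
    rw [h2]
    exact h1.tail (Or.inr (Or.inr ⟨rfl, by simp, rfl⟩))

lemma strong_conn (hr : 2 ≤ r) (hk : 2 ≤ k) (u v : Fin r × Fin k) :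
    Reaches r k u v := by
  refine (reach_to0 hk u).trans ?_
  have hv : v = (v.1, v.2) := rfl
  rcases Nat.eq_zero_or_pos (v.2 : ℕ) with h0 | h0
  · have hv0 : v = (v.1, ⟨0, by omega⟩) := Prod.ext rfl (Fin.ext h0)
    rw [hv0]
    rcases eq_or_ne u.1 v.1 with he | he
    · rw [he]
    · exact reach00 hk u.1 v.1 he
  · rcases eq_or_ne u.1 v.1 with he | he
    · obtain ⟨i'', hi''⟩ : ∃ i'' : Fin r, i'' ≠ u.1 := by
        rcases eq_or_ne u.1 ⟨0, by omega⟩ with h | h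
        · exact ⟨⟨1, by omega⟩, by rw [h]; simp [Fin.ext_iff]⟩
        · exact ⟨⟨0, by omega⟩, Ne.symm h⟩
      refine (reach00 hk u.1 i'' (Ne.symm hi'')).trans ?_
      rw [hv]
      exact reach_from0 hk i'' v.1 (by rw [← he]; exact hi'') v.2 h0
    · rw [hv]
      exact reach_from0 hk u.1 v.1 he v.2 h0

lemma outdeg_zero (hr : 2 ≤ r) (hk : 2 ≤ k) (u : Fin r × Fin k) (h0 : (u.2 : ℕ) = 0) :
    Nat.card {w // Arel r k u w} = r - 1 := by
  have e : {w // Arel r k u w} ≃ {i' : Fin r // ¬ i' = u.1} :=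
    { toFun := fun w => ⟨w.1.1, (step_zero hk w.2 h0).1⟩
      invFun := fun i' => ⟨(i'.1, ⟨1, by omega⟩), Or.inr (Or.inl ⟨Ne.symm i'.2, h0, rfl⟩)⟩
      left_inv := fun w => by
        have h2 := (step_zero hk w.2 h0).2
        exact Subtype.ext (Prod.ext rfl (Fin.ext (by simpa using h2.symm)))
      right_inv := fun i' => rfl }
  rw [Nat.card_congr e, Nat.card_eq_fintype_card, Fintype.card_subtype_compl,
    Fintype.card_subtype_eq, Fintype.card_fin]

lemma outdeg_pos (hk : 2 ≤ k) (u : Fin r × Fin k) (h1 : 1 ≤ (u.2 : ℕ)) :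
    Nat.card {w // Arel r k u w} = 1 := by
  rw [Nat.card_eq_one_iff_unique]
  constructor
  · exact ⟨fun v w => Subtype.ext (step_det hk v.2 w.2 (by omega))⟩
  · have hu : (u.2 : ℕ) < k := u.2.isLt
    by_cases h : (u.2 : ℕ) ≤ k - 2
    · exact ⟨⟨(u.1, ⟨(u.2 : ℕ) + 1, by omega⟩), Or.inl ⟨rfl, h1, h, rfl⟩⟩⟩
    · exact ⟨⟨(u.1, ⟨0, by omega⟩), Or.inr (Or.inr ⟨rfl, by omega, rfl⟩)⟩⟩

lemma count_arcs (hr : 2 ≤ r) (hk : 2 ≤ k) :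
    Nat.card {p : (Fin r × Fin k) × (Fin r × Fin k) // Arel r k p.1 p.2} =
      r ^ 2 + (k - 2) * r := by
  rw [Nat.card_congr (Equiv.subtypeProdEquivSigmaSubtype (Arel r k)),
    Nat.card_eq_fintype_card, Fintype.card_sigma]
  have hstep : ∀ u : Fin r × Fin k,
      Fintype.card {w // Arel r k u w} = if (u.2 : ℕ) = 0 then r - 1 else 1 := by
    intro u
    rw [← Nat.card_eq_fintype_card]
    rcases Nat.eq_zero_or_pos (u.2 : ℕ) with h | h
    · rw [if_pos h]; exact outdeg_zero hr hk u h
    · rw [if_neg (by omega)]; exact outdeg_pos hk u h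
  simp_rw [hstep]
  rw [Fintype.sum_prod_type]
  have hin : ∀ i : Fin r,
      (∑ j : Fin k, if ((i, j).2 : ℕ) = 0 then r - 1 else 1) = (r - 2) + k := by
    intro i
    have : ∀ j : Fin k, (if ((i, j).2 : ℕ) = 0 then r - 1 else 1)
        = (if j = (⟨0, by omega⟩ : Fin k) then r - 2 else 0) + 1 := by
      intro j
      rcases eq_or_ne (j : ℕ) 0 with h | h
      · rw [if_pos h, if_pos (Fin.ext h)]; omega
      · rw [if_neg h, if_neg (fun hc => h (by rw [hc]))]
    simp_rw [this]
    rw [Finset.sum_add_distrib, Finset.sum_ite_eq' Finset.univ, if_pos (Finset.mem_univ _)]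
    simp [mul_comm]
  simp_rw [hin]
  rw [Finset.sum_const, Finset.card_univ, Fintype.card_fin, smul_eq_mul]
  obtain ⟨r', rfl⟩ : ∃ r', r = r' + 2 := ⟨r - 2, by omega⟩
  obtain ⟨k', rfl⟩ : ∃ k', k = k' + 2 := ⟨k - 2, by omega⟩
  simp only [Nat.add_sub_cancel]
  ring

lemma degenerate {r k : ℕ} (hk : 2 ≤ k) (u : Fin r × Fin k) (p₁ : List (Fin r × Fin k))
    (hcp : List.Chain' (Arel r k) (u :: p₁)) (hlenp : p₁.length = k)
    (hlast : p₁.getLastD u = u) : False := by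
  have hd : (p₁.getLastD u).1 ≠ u.1 := by
    refine walk_diffrow hk p₁ u hcp (le_of_eq hlenp) ?_
    rcases Nat.eq_zero_or_pos (u.2 : ℕ) with h | h
    · exact Or.inl ⟨h, by omega⟩
    · exact Or.inr ⟨h, by omega⟩
  rw [hlast] at hd
  exact hd rfl

theorem main (r k : ℕ) (hr : 2 ≤ r) (hk : 2 ≤ k) :
    (∀ u v : Fin r × Fin k, Relation.ReflTransGen (Arel r k) u v) ∧
    IsKGeodetic (Arel r k) k ∧
    numArcs (Arel r k) = r ^ 2 + (k - 2) * r := by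
  refine ⟨fun u v => strong_conn hr hk u v, ?_, count_arcs hr hk⟩
  intro p q hp hq hhead hlast hlp hlq
  obtain ⟨hpne, hcp⟩ := hp
  obtain ⟨hqne, hcq⟩ := hq
  rcases p with _ | ⟨u, p₁⟩; · exact absurd rfl hpne
  rcases q with _ | ⟨u', q₁⟩; · exact absurd rfl hqne
  simp only [List.head?_cons, Option.some.injEq] at hhead
  subst hhead
  have hlast' : p₁.getLastD u = q₁.getLastD u := by
    rw [List.getLast?_cons, List.getLast?_cons, ← List.getLastD_eq_getLast?,
      ← List.getLastD_eq_getLast?] at hlast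
    exact Option.some.inj hlast
  simp only [List.length_cons] at hlp hlq
  have hp1 : p₁.length ≤ k := by omega
  have hq1 : q₁.length ≤ k := by omega
  have h1 := walk_level hk p₁ u hcp
  have h2 := walk_level hk q₁ u hcq
  have hmod : p₁.length % k = q₁.length % k := by
    have h3 : ((u.2 : ℕ) + p₁.length) % k = ((u.2 : ℕ) + q₁.length) % k := by
      rw [← h1, ← h2, hlast']
    exact Nat.ModEq.add_left_cancel' (u.2 : ℕ) h3
  by_cases heq : p₁.length = q₁.length
  · have := walk_unique hk q₁.length u p₁ q₁ hcp hcq heq rfl hq1 hlast'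
    rw [this]
  · exfalso
    rcases Nat.lt_or_ge p₁.length k with hplt | hpge
    · rcases Nat.lt_or_ge q₁.length k with hqlt | hqge
      · rw [Nat.mod_eq_of_lt hplt, Nat.mod_eq_of_lt hqlt] at hmod
        exact heq hmod
      · have hqk : q₁.length = k := by omega
        rw [Nat.mod_eq_of_lt hplt, hqk, Nat.mod_self] at hmod
        have hp0 : p₁ = [] := List.length_eq_zero_iff.1 hmod
        subst hp0
        exact degenerate hk u q₁ hcq hqk (by simpa using hlast'.symm)
    · have hpk : p₁.length = k := by omega
      have hqlt : q₁.length < k := by omega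
      rw [hpk, Nat.mod_self, Nat.mod_eq_of_lt hqlt] at hmod
      have hq0 : q₁ = [] := List.length_eq_zero_iff.1 hmod.symm
      subst hq0
      exact degenerate hk u p₁ hcp hpk (by simpa using hlast')


end Stmt13Aux

/-- The digraph `G(kr,k)` (vertices `u_{i,j}`, `i ∈ Fin r`, `j ∈ Fin k`, zero-indexed:
arcs `u_{i,j} → u_{i,j+1}` for `1 ≤ j ≤ k-2`, `u_{i,0} → u_{i',1}` for `i ≠ i'`, and
`u_{i,k-1} → u_{i,0}`) is a strongly connected `k`-geodetic digraph on `n = kr`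
vertices with `r² + (k-2)r` arcs. -/
theorem stmt13 (r k : ℕ) (hr : 2 ≤ r) (hk : 2 ≤ k) :
    (∀ u v : Fin r × Fin k, Relation.ReflTransGen (fun p q : Fin r × Fin k =>
      (p.1 = q.1 ∧ 1 ≤ (p.2 : ℕ) ∧ (p.2 : ℕ) ≤ k - 2 ∧ (q.2 : ℕ) = (p.2 : ℕ) + 1) ∨
      (p.1 ≠ q.1 ∧ (p.2 : ℕ) = 0 ∧ (q.2 : ℕ) = 1) ∨
      (p.1 = q.1 ∧ (p.2 : ℕ) = k - 1 ∧ (q.2 : ℕ) = 0)) u v) ∧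
    IsKGeodetic (fun p q : Fin r × Fin k =>
      (p.1 = q.1 ∧ 1 ≤ (p.2 : ℕ) ∧ (p.2 : ℕ) ≤ k - 2 ∧ (q.2 : ℕ) = (p.2 : ℕ) + 1) ∨
      (p.1 ≠ q.1 ∧ (p.2 : ℕ) = 0 ∧ (q.2 : ℕ) = 1) ∨
      (p.1 = q.1 ∧ (p.2 : ℕ) = k - 1 ∧ (q.2 : ℕ) = 0)) k ∧
    numArcs (fun p q : Fin r × Fin k =>
      (p.1 = q.1 ∧ 1 ≤ (p.2 : ℕ) ∧ (p.2 : ℕ) ≤ k - 2 ∧ (q.2 : ℕ) = (p.2 : ℕ) + 1) ∨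
      (p.1 ≠ q.1 ∧ (p.2 : ℕ) = 0 ∧ (q.2 : ℕ) = 1) ∨
      (p.1 = q.1 ∧ (p.2 : ℕ) = k - 1 ∧ (q.2 : ℕ) = 0)) = r ^ 2 + (k - 2) * r :=
  Stmt13Aux.main r k hr hk
end

section
/- The number of directed cycles of length k+1 in a k-geodetic digraph on n vertices is at most Σ_{i=1}^{n} i^{1/k}. -/
lemma walk_ofFn {V : Type*} {A : V → V → Prop} {j : ℕ} (w : Fin (j+1) → V)
    (h : ∀ i : Fin j, A (w i.castSucc) (w i.succ)) :
    IsWalk A (List.ofFn w) := by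
  constructor
  · simp [List.ofFn_succ]
  · refine List.isChain_iff_getElem.mpr ?_
    intro i hi
    simp only [List.length_ofFn] at hi
    rw [List.getElem_ofFn, List.getElem_ofFn]
    have := h ⟨i, by omega⟩
    convert this using 2 <;> apply Fin.ext <;> simp

lemma head?_ofFn {V : Type*} {j : ℕ} (w : Fin (j+1) → V) :
    (List.ofFn w).head? = some (w 0) := by
  rw [List.ofFn_succ]; rfl

lemma getLast?_ofFn {V : Type*} {j : ℕ} (w : Fin (j+1) → V) :
    (List.ofFn w).getLast? = some (w (Fin.last j)) := by
  rw [List.getLast?_eq_getElem?]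
  have hl : (List.ofFn w).length - 1 = j := by simp
  rw [hl, List.getElem?_ofFn]
  simp [List.ofFnNthVal, Fin.last]

lemma zmod_last_add_one {k : ℕ} : (1 : ZMod (k+1)) + ((k : ℕ) : ZMod (k+1)) = 0 := by
  have h := ZMod.natCast_self (k+1)
  push_cast at h
  linear_combination h

lemma param_ext {V : Type*} {A : V → V → Prop} {k : ℕ} (hgeo : IsKGeodetic A k)
    {c c' : ZMod (k+1) → V}
    (hc : ∀ i, A (c i) (c (i+1))) (hc' : ∀ i, A (c' i) (c' (i+1)))
    (h0 : c 0 = c' 0) (h1 : c 1 = c' 1) : c = c' := by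
  have key : ∀ (d : ZMod (k+1) → V), (∀ i, A (d i) (d (i+1))) →
      ∀ i : Fin k, A ((fun j : Fin (k+1) => d (1 + (j : ℕ))) i.castSucc)
        ((fun j : Fin (k+1) => d (1 + (j : ℕ))) i.succ) := by
    intro d hd i
    simp only [Fin.coe_castSucc, Fin.val_succ, Nat.cast_add, Nat.cast_one, ← add_assoc]
    exact hd _
  set w : Fin (k+1) → V := fun j => c (1 + (j : ℕ)) with hw
  set w' : Fin (k+1) → V := fun j => c' (1 + (j : ℕ)) with hw'
  have heq : List.ofFn w = List.ofFn w' := by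
    apply hgeo _ _ (walk_ofFn w (key c hc)) (walk_ofFn w' (key c' hc'))
    · rw [head?_ofFn, head?_ofFn]
      simp [hw, hw', h1]
    · rw [getLast?_ofFn, getLast?_ofFn]
      have hz : (1 : ZMod (k+1)) + ((k : ℕ) : ZMod (k+1)) = 0 := zmod_last_add_one
      simp [hw, hw', Fin.last, hz, h0]
    · simp
    · simp
  have hww : w = w' := List.ofFn_inj.mp heq
  funext i
  set j : Fin (k+1) := ⟨(i - 1).val, ZMod.val_lt _⟩ with hj
  have hjv : ((j : ℕ) : ZMod (k+1)) = i - 1 := ZMod.natCast_rightInverse (i - 1)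
  have := congrFun hww j
  simp only [hw, hw'] at this
  rw [hjv] at this
  simpa using this

lemma geo_restrict {V : Type*} {A : V → V → Prop} {k : ℕ} (hgeo : IsKGeodetic A k)
    (P : V → Prop) : IsKGeodetic (fun x y : Subtype P => A x.1 y.1) k := by
  intro p q hp hq hh hl hlp hlq
  have h := hgeo (p.map Subtype.val) (q.map Subtype.val)
    ⟨fun h => hp.1 (List.map_eq_nil_iff.mp h), (List.isChain_map _).mpr hp.2⟩
    ⟨fun h => hq.1 (List.map_eq_nil_iff.mp h), (List.isChain_map _).mpr hq.2⟩
    (by rw [List.head?_map, List.head?_map, hh])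
    (by rw [List.getLast?_map, List.getLast?_map, hl])
    (by simpa using hlp) (by simpa using hlq)
  exact List.map_injective_iff.mpr Subtype.val_injective h

def Param {V : Type*} (A : V → V → Prop) (k : ℕ) :=
  {c : ZMod (k + 1) → V // Function.Injective c ∧ ∀ i, A (c i) (c (i + 1))}

def rotP {V : Type*} {A : V → V → Prop} {k : ℕ} (s : ZMod (k+1)) (x : Param A k) :
    Param A k :=
  ⟨fun j => x.1 (j + s), x.2.1.comp (add_left_injective s),
    fun i => by simpa [add_right_comm] using x.2.2 (i + s)⟩

lemma rotP_apply {V : Type*} {A : V → V → Prop} {k : ℕ} (s : ZMod (k+1)) (x : Param A k)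
    (j : ZMod (k+1)) : (rotP s x).1 j = x.1 (j + s) := rfl

lemma rotP_neg_rotP {V : Type*} {A : V → V → Prop} {k : ℕ} (s : ZMod (k+1)) (x : Param A k) :
    rotP (-s) (rotP s x) = x := by
  apply Subtype.ext; funext j
  show x.1 (j + -s + s) = x.1 j
  congr 1; ring

lemma rotP_rotP_neg {V : Type*} {A : V → V → Prop} {k : ℕ} (s : ZMod (k+1)) (x : Param A k) :
    rotP s (rotP (-s) x) = x := by
  apply Subtype.ext; funext j
  show x.1 (j + s + -s) = x.1 j
  congr 1; ring

universe u

lemma key_bound (k : ℕ) (hk : 2 ≤ k) :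
    ∀ (n : ℕ) (V : Type u) [Fintype V] (A : V → V → Prop), IsKGeodetic A k →
      Fintype.card V = n →
      (Nat.card (Param A k) : ℝ) ≤
        (k + 1) * ∑ i ∈ Finset.Icc 1 n, (i : ℝ) ^ ((1 : ℝ) / k) := by
  intro n
  induction n with
  | zero =>
    intro V _ A hgeo hcard
    haveI : IsEmpty V := Fintype.card_eq_zero_iff.mp hcard
    haveI : IsEmpty (Param A k) := ⟨fun x => IsEmpty.false (x.1 0)⟩
    rw [Nat.card_of_isEmpty]
    simp
  | succ n ih =>
    intro V _ A hgeo hcard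
    classical
    haveI : Finite (Param A k) := by unfold Param; infer_instance
    haveI : Fintype (Param A k) := Fintype.ofFinite _
    rcases isEmpty_or_nonempty (Param A k) with hE | hNE
    · rw [Nat.card_of_isEmpty]
      have : (0:ℝ) ≤ (k + 1) * ∑ i ∈ Finset.Icc 1 (n+1), (i : ℝ) ^ ((1 : ℝ) / k) := by
        apply mul_nonneg (by positivity)
        apply Finset.sum_nonneg
        intro i _
        positivity
      exact_mod_cast this
    · obtain ⟨c₀⟩ := hNE
      set g : V → ℕ := fun v => (Finset.univ.filter (fun x : Param A k => x.1 0 = v)).card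
        with hg
      set T : Finset V := Finset.univ.filter (fun v => 0 < g v) with hTdef
      have hrot0 : ∀ (x : Param A k) (s : ZMod (k+1)), (rotP s x).1 0 = x.1 s := by
        intro x s; rw [rotP_apply, zero_add]
      have hmemT : ∀ (x : Param A k) (s : ZMod (k+1)), x.1 s ∈ T := by
        intro x s
        simp only [hTdef, Finset.mem_filter, Finset.mem_univ, true_and, hg]
        exact Finset.card_pos.mpr ⟨rotP s x, by
          simp only [Finset.mem_filter, Finset.mem_univ, true_and]; exact hrot0 x s⟩
      have hT : T.Nonempty := ⟨c₀.1 0, hmemT c₀ 0⟩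
      obtain ⟨vs, hvsT, hmin⟩ := Finset.exists_min_image T g hT
      set t := g vs with ht
      -- the union-of-cycles arc relation
      set AH : V → V → Prop :=
        fun a b => ∃ (x : Param A k) (i : ZMod (k+1)), x.1 i = a ∧ x.1 (i+1) = b with hAH
      have hAH_A : ∀ a b, AH a b → A a b := by
        rintro a b ⟨x, i, rfl, rfl⟩; exact x.2.2 i
      have hAH_T : ∀ a b, AH a b → b ∈ T := by
        rintro a b ⟨x, i, rfl, rfl⟩; exact hmemT x (i+1)
      -- out-degree in H equals g
      have hout : ∀ v : V, (Finset.univ.filter (fun z : V => AH v z)).card = g v := by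
        intro v
        rw [hg]
        symm
        apply Finset.card_bij (fun (x : Param A k) _ => x.1 1)
        · intro x hx
          simp only [Finset.mem_filter, Finset.mem_univ, true_and] at hx ⊢
          exact ⟨x, 0, hx, by rw [zero_add]⟩
        · intro x hx y hy hxy
          simp only [Finset.mem_filter, Finset.mem_univ, true_and] at hx hy
          apply Subtype.ext
          exact param_ext hgeo x.2.2 y.2.2 (hx.trans hy.symm) hxy
        · intro z hz
          simp only [Finset.mem_filter, Finset.mem_univ, true_and] at hz
          obtain ⟨x, i, hxi, hxi1⟩ := hz
          refine ⟨rotP i x, ?_, ?_⟩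
          · simp only [Finset.mem_filter, Finset.mem_univ, true_and]
            rw [hrot0]; exact hxi
          · rw [rotP_apply, add_comm 1 i]; exact hxi1
      -- walk finsets in H
      set Wf : (j : ℕ) → V → Finset (Fin (j+1) → V) := fun j v =>
        Finset.univ.filter
          (fun w => w 0 = v ∧ ∀ i : Fin j, AH (w i.castSucc) (w i.succ)) with hWf
      -- Moore lower bound
      have hlow : ∀ (j : ℕ), ∀ v ∈ T, t ^ j ≤ (Wf j v).card := by
        intro j
        induction j with
        | zero =>
          intro v hv
          have : (fun _ : Fin 1 => v) ∈ Wf 0 v :=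
            Finset.mem_filter.mpr ⟨Finset.mem_univ _, rfl, fun i => i.elim0⟩
          simpa using Finset.card_pos.mpr ⟨_, this⟩
        | succ j ihj =>
          intro v hv
          set O : Finset V := Finset.univ.filter (fun z : V => AH v z) with hO
          set cns : (Fin (j+1) → V) → (Fin (j+1+1) → V) := fun u => Fin.cons v u with hcns
          have hcnsinj : Function.Injective cns := by
            intro a b h
            funext i
            have := congrFun h i.succ
            simpa [hcns, Fin.cons_succ] using this
          have hsub : O.biUnion (fun z => (Wf j z).image cns) ⊆ Wf (j+1) v := by
            intro w hw
            simp only [Finset.mem_biUnion, Finset.mem_image] at hw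
            obtain ⟨z, hzO, u, huW, rfl⟩ := hw
            simp only [hO, Finset.mem_filter, Finset.mem_univ, true_and] at hzO
            simp only [hWf, Finset.mem_filter, Finset.mem_univ, true_and] at huW ⊢
            refine ⟨Fin.cons_zero _ _, ?_⟩
            intro i
            refine Fin.cases ?_ ?_ i
            · simp only [hcns, Fin.castSucc_zero, Fin.cons_zero, Fin.cons_succ]
              rw [huW.1]; exact hzO
            · intro m
              simp only [hcns, Fin.cons_succ]
              exact huW.2 m
          have hdisj : ∀ z₁ ∈ O, ∀ z₂ ∈ O, z₁ ≠ z₂ →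
              Disjoint ((Wf j z₁).image cns) ((Wf j z₂).image cns) := by
            intro z₁ _ z₂ _ hne
            rw [Finset.disjoint_left]
            intro w hw1 hw2
            simp only [Finset.mem_image] at hw1 hw2
            obtain ⟨u₁, hu₁, rfl⟩ := hw1
            obtain ⟨u₂, hu₂, he⟩ := hw2
            have : u₁ = u₂ := hcnsinj he.symm
            subst this
            simp only [hWf, Finset.mem_filter, Finset.mem_univ, true_and] at hu₁ hu₂
            exact hne (hu₁.1.symm.trans hu₂.1)
          calc t ^ (j+1) = t * t ^ j := by ring
            _ ≤ g v * t ^ j := Nat.mul_le_mul_right _ (hmin v hv)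
            _ = ∑ z ∈ O, t ^ j := by rw [Finset.sum_const, smul_eq_mul, hO, hout]
            _ ≤ ∑ z ∈ O, ((Wf j z).image cns).card := by
                apply Finset.sum_le_sum
                intro z hz
                rw [Finset.card_image_of_injective _ hcnsinj]
                apply ihj
                simp only [hO, Finset.mem_filter, Finset.mem_univ, true_and] at hz
                exact hAH_T _ _ hz
            _ = (O.biUnion (fun z => (Wf j z).image cns)).card :=
                (Finset.card_biUnion hdisj).symm
            _ ≤ (Wf (j+1) v).card := Finset.card_le_card hsub
      -- Moore upper bound
      have hup : (Wf k vs).card ≤ n + 1 := by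
        rw [← hcard, ← Finset.card_univ]
        apply Finset.card_le_card_of_injOn (fun w => w (Fin.last k)) (fun _ _ => Finset.mem_univ _)
        intro w hw w' hw' hlast
        simp only [Finset.mem_coe, hWf, Finset.mem_filter, Finset.mem_univ, true_and] at hw hw'
        have hcw : ∀ i : Fin k, A (w i.castSucc) (w i.succ) := fun i => hAH_A _ _ (hw.2 i)
        have hcw' : ∀ i : Fin k, A (w' i.castSucc) (w' i.succ) := fun i => hAH_A _ _ (hw'.2 i)
        have := hgeo (List.ofFn w) (List.ofFn w') (walk_ofFn w hcw) (walk_ofFn w' hcw')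
          (by rw [head?_ofFn, head?_ofFn, hw.1, hw'.1])
          (by rw [getLast?_ofFn, getLast?_ofFn]; exact congrArg some hlast)
          (by simp) (by simp)
        exact List.ofFn_inj.mp this
      have htk : t ^ k ≤ n + 1 := le_trans (hlow k vs hvsT) hup
      -- count split
      have hsplit : (Finset.univ.filter (fun x : Param A k => ∃ s, x.1 s = vs)).card
          + (Finset.univ.filter (fun x : Param A k => ¬ ∃ s, x.1 s = vs)).card
          = Fintype.card (Param A k) := by
        rw [Finset.card_filter_add_card_filter_not, Finset.card_univ]
      have heach : ∀ s : ZMod (k+1),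
          (Finset.univ.filter (fun x : Param A k => x.1 s = vs)).card
          = (Finset.univ.filter (fun x : Param A k => x.1 0 = vs)).card := by
        intro s
        apply Finset.card_bij (fun (x : Param A k) _ => rotP s x)
        · intro x hx
          simp only [Finset.mem_filter, Finset.mem_univ, true_and] at hx ⊢
          rw [hrot0]; exact hx
        · intro x hx y hy hxy
          have := congrArg (rotP (-s)) hxy
          rwa [rotP_neg_rotP, rotP_neg_rotP] at this
        · intro y hy
          simp only [Finset.mem_filter, Finset.mem_univ, true_and] at hy
          refine ⟨rotP (-s) y, ?_, rotP_rotP_neg s y⟩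
          simp only [Finset.mem_filter, Finset.mem_univ, true_and]
          rw [rotP_apply, add_neg_cancel]
          exact hy
      have hthrough : (Finset.univ.filter (fun x : Param A k => ∃ s, x.1 s = vs)).card
          = (k+1) * t := by
        have hun : (Finset.univ.filter (fun x : Param A k => ∃ s, x.1 s = vs))
            = Finset.univ.biUnion (fun s : ZMod (k+1) =>
                Finset.univ.filter (fun x : Param A k => x.1 s = vs)) := by
          ext x
          simp [Finset.mem_biUnion]
        rw [hun, Finset.card_biUnion]
        · rw [Finset.sum_congr rfl (fun s _ => heach s), Finset.sum_const, smul_eq_mul,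
            Finset.card_univ, ZMod.card]
        · intro s₁ _ s₂ _ hne
          rw [Function.onFun, Finset.disjoint_left]
          intro x hx1 hx2
          simp only [Finset.mem_filter, Finset.mem_univ, true_and] at hx1 hx2
          exact hne (x.2.1 (hx1.trans hx2.symm))
      -- avoiding params = params of the restricted digraph
      haveI : Finite (Param (fun a b : {y : V // y ≠ vs} => A a.1 b.1) k) := by
        unfold Param; infer_instance
      haveI : Fintype (Param (fun a b : {y : V // y ≠ vs} => A a.1 b.1) k) :=
        Fintype.ofFinite _
      have havoid : (Finset.univ.filter (fun x : Param A k => ¬ ∃ s, x.1 s = vs)).card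
          = Nat.card (Param (fun a b : {y : V // y ≠ vs} => A a.1 b.1) k) := by
        rw [← Fintype.card_subtype, Nat.card_eq_fintype_card]
        apply Fintype.card_congr
        exact {
          toFun := fun x => ⟨fun i => ⟨x.1.1 i, fun h => x.2 ⟨i, h⟩⟩,
            fun i j h => x.1.2.1 (congrArg Subtype.val h),
            fun i => x.1.2.2 i⟩
          invFun := fun y => ⟨⟨fun i => (y.1 i).1,
            fun i j h => y.2.1 (Subtype.ext h),
            fun i => y.2.2 i⟩,
            fun hex => by obtain ⟨s, hs⟩ := hex; exact (y.1 s).2 hs⟩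
          left_inv := fun x => by apply Subtype.ext; apply Subtype.ext; funext i; rfl
          right_inv := fun y => by apply Subtype.ext; funext i; apply Subtype.ext; rfl
        }
      haveI instV' : Fintype {y : V // y ≠ vs} := Fintype.ofFinite _
      have hcard' : Fintype.card {y : V // y ≠ vs} = n := by
        have h1 := Fintype.card_subtype_compl (fun y : V => y = vs)
        rw [Fintype.card_subtype_eq, hcard] at h1
        have h2 : Fintype.card {y : V // y ≠ vs} = Fintype.card {y : V // ¬ y = vs} :=
          Fintype.card_congr (Equiv.subtypeEquivRight (fun y => Iff.rfl))
        omega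
      have hIH := ih {y : V // y ≠ vs} (fun a b => A a.1 b.1) (geo_restrict hgeo _) hcard'
      -- real: t ≤ (n+1)^(1/k)
      have hk0 : (k:ℝ) ≠ 0 := Nat.cast_ne_zero.mpr (by omega)
      have htle : (t : ℝ) ≤ ((n+1 : ℕ) : ℝ) ^ ((1:ℝ)/k) := by
        have h1 : ((t:ℝ) ^ (k:ℕ)) ≤ ((n+1:ℕ):ℝ) := by exact_mod_cast htk
        have h2 : (t:ℝ) = ((t:ℝ) ^ (k:ℕ)) ^ ((1:ℝ)/k) := by
          rw [← Real.rpow_natCast (t:ℝ) k, ← Real.rpow_mul (by positivity),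
            mul_one_div, div_self hk0, Real.rpow_one]
        rw [h2]
        exact Real.rpow_le_rpow (pow_nonneg (Nat.cast_nonneg _) _) h1 (by positivity)
      have hcount : (Nat.card (Param A k) : ℝ)
          = ((k:ℝ)+1) * t + (Nat.card (Param (fun a b : {y : V // y ≠ vs} => A a.1 b.1) k) : ℝ) := by
        rw [Nat.card_eq_fintype_card, ← hsplit, hthrough, havoid]
        push_cast; ring
      have hsum : ∑ i ∈ Finset.Icc 1 (n+1), (i : ℝ) ^ ((1 : ℝ) / k)
          = ∑ i ∈ Finset.Icc 1 n, (i : ℝ) ^ ((1 : ℝ) / k) + ((n+1:ℕ):ℝ) ^ ((1:ℝ)/k) := by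
        rw [Finset.sum_Icc_succ_top (by omega : 1 ≤ n + 1)]
      rw [hcount, hsum, mul_add]
      have h2 : ((k:ℝ)+1) * (t:ℝ) ≤ ((k:ℝ)+1) * (((n+1:ℕ):ℝ) ^ ((1:ℝ)/k)) :=
        mul_le_mul_of_nonneg_left htle (by positivity)
      linarith [hIH]

/-- The number of directed `(k+1)`-cycles in a `k`-geodetic digraph on `n` vertices is
at most `∑_{i=1}^{n} i^(1/k)`. (Each cycle, counted up to rotation, corresponds to
exactly `k+1` cyclic parametrisations `c : ZMod (k+1) → V`.) -/
theorem stmt16 {V : Type*} [Fintype V] (k : ℕ) (hk : 2 ≤ k)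
    (A : V → V → Prop) (hgeo : IsKGeodetic A k) :
    (Nat.card {c : ZMod (k + 1) → V //
        Function.Injective c ∧ ∀ i, A (c i) (c (i + 1))} : ℝ) ≤
      (k + 1) * ∑ i ∈ Finset.Icc 1 (Fintype.card V), (i : ℝ) ^ ((1 : ℝ) / k) := by
  exact key_bound k hk (Fintype.card V) V A hgeo rfl
end
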